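/- arXiv:2310.18422 — 4 statements merged into one kernel-verified Lean document; each statement's English description precedes it below -/
import Mathlib

section
/- Consider a triangular array: for each n, a probability space carrying sub-σ-algebras 𝓕₁ⁿ ⊆ 𝓕₂ⁿ, integrable 𝓕₁ⁿ-measurable random variables F̂ⁿ,¹,…,F̂ⁿ,ᴹ⁽ⁿ⁾, integrable 𝓕₂ⁿ-measurable random variables F̂*ⁿ,¹,…,F̂*ⁿ,ᴹ⁽ⁿ⁾, and selection indices π(1),…,π(I(n)) i.i.d. uniform on {1,…,M(n)} independent of 𝓕₂ⁿ, with I(n) ≤ M(n). Suppose that the conditional biases are uniformly o_p(n⁻¹), i.e. writing Rₙᵐ = E(F̂*ⁿ,ᵐ | 𝓕₁ⁿ) − F̂ⁿ,ᵐ, one has max_{1 ≤ m ≤ M(n)} n·|Rₙᵐ| → 0 in probability as n → ∞. Then E( √n·(F̄*_{I(n)} − F̄_{M(n)}) | 𝓕₁ⁿ ) → 0 in probability as n → ∞, where F̄_{M(n)} = (1/M(n))Σ_{m=1}^{M(n)} F̂ⁿ,ᵐ and F̄*_{I(n)} = (1/I(n))Σ_{l=1}^{I(n)} F̂*ⁿ,π(l).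 -/
/-!
Conditionally on `𝓕₁`, the selected estimator `F̂*^{π(l)}` is a uniform mixture of the
`F̂*^m`: since `π(l)` is independent of `𝓕₂ ⊇ 𝓕₁` and each `F̂*^m` is `𝓕₂`-measurable,
`E(1_{π(l) = m} F̂*^m | 𝓕₁) = M⁻¹ E(F̂*^m | 𝓕₁)`. Hence
`E(√n (F̄*_I − F̄_M) | 𝓕₁) = √n · M⁻¹ ∑_m Rₙᵐ`, an average of the conditional biases, and
`|√n · M⁻¹ ∑_m Rₙᵐ| ≤ max_m n |Rₙᵐ|` for `n ≥ 1`.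
-/

open MeasureTheory ProbabilityTheory Finset Filter

section Selection

variable {Ω ι : Type*} {m₁ m₂ mA : MeasurableSpace Ω} {mΩ : MeasurableSpace Ω} {μ : Measure Ω}

theorem condExp_indicator_of_indep [IsFiniteMeasure μ] (h₁₂ : m₁ ≤ m₂) (h₂ : m₂ ≤ mΩ)
    (hA_le : mA ≤ mΩ) (hind : Indep mA m₂ μ) {A : Set Ω} (hA : MeasurableSet[mA] A)
    {f : Ω → ℝ} (hf : Integrable f μ) (hfm : StronglyMeasurable[m₂] f) :
    μ[A.indicator f | m₁] =ᵐ[μ] μ.real A • μ[f | m₁] := by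
  have hA' : MeasurableSet A := hA_le _ hA
  have hindicator : μ[A.indicator 1 | m₂] =ᵐ[μ] fun _ => μ.real A :=
    (condExp_indep_eq hA_le h₂ (stronglyMeasurable_one.indicator hA) hind).trans
      (.of_eq (by rw [integral_indicator_one hA']))
  have hA_f : A.indicator f = A.indicator 1 * f := by
    ext ω
    by_cases hω : ω ∈ A <;> simp [hω]
  have hcond₂ : μ[A.indicator f | m₂] =ᵐ[μ] μ.real A • f := by
    rw [hA_f]
    refine (condExp_mul_of_stronglyMeasurable_right hfm (hA_f ▸ hf.indicator hA')
      ((integrable_const 1).indicator hA')).trans ?_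
    filter_upwards [hindicator] with ω hω
    simp [hω]
  calc μ[A.indicator f | m₁] =ᵐ[μ] μ[μ[A.indicator f | m₂] | m₁] :=
        (condExp_condExp_of_le h₁₂ h₂).symm
    _ =ᵐ[μ] μ[μ.real A • f | m₁] := condExp_congr_ae hcond₂
    _ =ᵐ[μ] μ.real A • μ[f | m₁] := condExp_smul _ _ _

theorem comp_eq_sum_indicator_preimage [Fintype ι] {E : Type*} [AddCommMonoid E]
    (π : Ω → ι) (f : ι → Ω → E) :
    (fun ω => f (π ω) ω) = ∑ i, (π ⁻¹' {i}).indicator (f i) := by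
  classical
  ext ω
  simp [Set.indicator_apply, eq_comm]

theorem condExp_comp_of_indep [Fintype ι] [MeasurableSpace ι] [MeasurableSingletonClass ι]
    [IsFiniteMeasure μ] (h₁₂ : m₁ ≤ m₂) (h₂ : m₂ ≤ mΩ) {π : Ω → ι} (hπ : Measurable π)
    (hind : Indep (MeasurableSpace.comap π inferInstance) m₂ μ) {f : ι → Ω → ℝ}
    (hf : ∀ i, Integrable (f i) μ) (hfm : ∀ i, StronglyMeasurable[m₂] (f i)) :
    μ[fun ω => f (π ω) ω | m₁] =ᵐ[μ] ∑ i, μ.real (π ⁻¹' {i}) • μ[f i | m₁] := by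
  rw [comp_eq_sum_indicator_preimage]
  refine (condExp_finsetSum (fun i _ => (hf i).indicator (hπ (measurableSet_singleton i))) _).trans
    (eventuallyEq_sum fun i _ => ?_)
  exact condExp_indicator_of_indep h₁₂ h₂ hπ.comap_le hind
    ⟨{i}, measurableSet_singleton i, rfl⟩ (hf i) (hfm i)

theorem integrable_comp_of_measurable [Fintype ι] [MeasurableSpace ι]
    [MeasurableSingletonClass ι] {E : Type*} [NormedAddCommGroup E] {π : Ω → ι}
    (hπ : Measurable π) {f : ι → Ω → E}
    (hf : ∀ i, Integrable (f i) μ) : Integrable (fun ω => f (π ω) ω) μ := by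
  rw [comp_eq_sum_indicator_preimage]
  exact integrable_finsetSum' _ fun i _ => (hf i).indicator (hπ (measurableSet_singleton i))

end Selection

section UniformSelection

variable {Ω : Type*} {m₁ m₂ : MeasurableSpace Ω} {mΩ : MeasurableSpace Ω} {μ : Measure Ω}
  [IsFiniteMeasure μ] {I M : ℕ} {π : Fin I → Ω → Fin M}

theorem condExp_mean_comp_of_uniform_of_indep (hI : 0 < I) (h₁₂ : m₁ ≤ m₂) (h₂ : m₂ ≤ mΩ)
    (hπ : ∀ l, Measurable (π l)) (hunif : ∀ l m, μ (π l ⁻¹' {m}) = (M : ENNReal)⁻¹)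
    (hind : ∀ l, Indep (MeasurableSpace.comap (π l) inferInstance) m₂ μ)
    {f : Fin M → Ω → ℝ} (hf : ∀ m, Integrable (f m) μ)
    (hfm : ∀ m, StronglyMeasurable[m₂] (f m)) :
    μ[fun ω => (1 / I : ℝ) * ∑ l, f (π l ω) ω | m₁] =ᵐ[μ]
      fun ω => (M : ℝ)⁻¹ * ∑ m, μ[f m | m₁] ω := by
  have hcomp : ∀ l, μ[fun ω => f (π l ω) ω | m₁] =ᵐ[μ]
      fun ω => (M : ℝ)⁻¹ * ∑ m, μ[f m | m₁] ω := fun l => by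
    filter_upwards [condExp_comp_of_indep h₁₂ h₂ (hπ l) (hind l) hf hfm] with ω hω
    simp [hω, Measure.real, hunif, Finset.mul_sum]
  have hmean : (fun ω => (1 / I : ℝ) * ∑ l, f (π l ω) ω) =
      (1 / I : ℝ) • ∑ l, fun ω => f (π l ω) ω := by
    ext ω
    simp
  rw [hmean]
  filter_upwards [condExp_smul (1 / I : ℝ) (∑ l, fun ω => f (π l ω) ω) m₁,
    condExp_finsetSum (fun l _ => integrable_comp_of_measurable (hπ l) hf) m₁,
    ae_all_iff.2 hcomp] with ω h_smul h_sum h_comp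
  have hI' : (I : ℝ) ≠ 0 := Nat.cast_ne_zero.2 hI.ne'
  rw [h_smul, Pi.smul_apply, h_sum, Finset.sum_apply]
  simp only [h_comp, Finset.sum_const, Finset.card_univ, Fintype.card_fin, nsmul_eq_mul,
    smul_eq_mul]
  field_simp

theorem condExp_mul_mean_comp_sub_mean (c : ℝ) (hI : 0 < I) (h₁₂ : m₁ ≤ m₂) (h₂ : m₂ ≤ mΩ)
    (hπ : ∀ l, Measurable (π l)) (hunif : ∀ l m, μ (π l ⁻¹' {m}) = (M : ENNReal)⁻¹)
    (hind : ∀ l, Indep (MeasurableSpace.comap (π l) inferInstance) m₂ μ)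
    {F Fstar : Fin M → Ω → ℝ} (hF : ∀ m, Integrable (F m) μ)
    (hFm : ∀ m, StronglyMeasurable[m₁] (F m)) (hFstar : ∀ m, Integrable (Fstar m) μ)
    (hFstarm : ∀ m, StronglyMeasurable[m₂] (Fstar m)) :
    μ[fun ω => c * ((1 / I : ℝ) * ∑ l, Fstar (π l ω) ω - (1 / M : ℝ) * ∑ m, F m ω) | m₁]
      =ᵐ[μ] fun ω => c * ((M : ℝ)⁻¹ * ∑ m, (μ[Fstar m | m₁] ω - F m ω)) := by
  let u : Ω → ℝ := fun ω => (1 / I : ℝ) * ∑ l, Fstar (π l ω) ω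
  let v : Ω → ℝ := fun ω => (1 / M : ℝ) * ∑ m, F m ω
  have hu : Integrable u μ :=
    (integrable_finsetSum _ fun l _ => integrable_comp_of_measurable (hπ l) hFstar).const_mul _
  have hv : Integrable v μ := (integrable_finsetSum _ fun m _ => hF m).const_mul _
  have hv_meas : StronglyMeasurable[m₁] v :=
    (Finset.stronglyMeasurable_fun_sum _ fun m _ => hFm m).const_mul _
  have hcondExp_v : μ[v | m₁] = v := condExp_of_stronglyMeasurable (h₁₂.trans h₂) hv_meas hv
  change μ[c • (u - v) | m₁] =ᵐ[μ] _
  filter_upwards [condExp_smul c (u - v) m₁, condExp_sub hu hv m₁,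
    condExp_mean_comp_of_uniform_of_indep hI h₁₂ h₂ hπ hunif hind hFstar hFstarm]
    with ω h_smul h_sub h_u
  rw [h_smul, Pi.smul_apply, h_sub, Pi.sub_apply, h_u, hcondExp_v, smul_eq_mul,
    Finset.sum_sub_distrib]
  ring

end UniformSelection

theorem abs_inv_mul_sum_lt {M : ℕ} {x : Fin M → ℝ} {ε : ℝ} (hε : 0 < ε)
    (hx : ∀ m, |x m| < ε) : |(M : ℝ)⁻¹ * ∑ m, x m| < ε := by
  rcases Nat.eq_zero_or_pos M with rfl | hM
  · simpa using hε
  have hM' : (0 : ℝ) < M := Nat.cast_pos.2 hM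
  have : NeZero M := ⟨hM.ne'⟩
  calc |(M : ℝ)⁻¹ * ∑ m, x m| ≤ (M : ℝ)⁻¹ * ∑ m, |x m| := by
        rw [abs_mul, abs_of_pos (inv_pos.2 hM')]
        gcongr
        exact Finset.abs_sum_le_sum_abs _ _
    _ < (M : ℝ)⁻¹ * ∑ _m : Fin M, ε := by
        gcongr ?_ * ?_
        exact Finset.sum_lt_sum_of_nonempty univ_nonempty fun m _ => hx m
    _ = ε := by simp [field]

theorem exists_le_mul_abs_of_le_abs_sqrt_mul_mean {n M : ℕ} (hn : 1 ≤ n) {x : Fin M → ℝ}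
    {ε : ℝ} (hε : 0 < ε) (h : ε ≤ |Real.sqrt n * ((M : ℝ)⁻¹ * ∑ m, x m)|) :
    ∃ m, ε ≤ n * |x m| := by
  by_contra! hsmall
  have hsqrt : Real.sqrt n ≤ n := Real.sqrt_le_self_iff.2 (.inr (by exact_mod_cast hn))
  refine h.not_gt ?_
  rw [mul_left_comm, Finset.mul_sum]
  refine abs_inv_mul_sum_lt hε fun m => ?_
  rw [abs_mul, abs_of_nonneg (Real.sqrt_nonneg _)]
  exact (mul_le_mul_of_nonneg_right hsqrt (abs_nonneg _)).trans_lt (hsmall m)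

theorem condexp_wbmi_tendsto_zero_inProb_general
    (Ω : ℕ → Type*) [mΩ : ∀ n, MeasurableSpace (Ω n)]
    (μ : ∀ n, Measure (Ω n)) [∀ n, IsProbabilityMeasure (μ n)]
    (𝓕₁ 𝓕₂ : ∀ n, MeasurableSpace (Ω n))
    (h12 : ∀ n, 𝓕₁ n ≤ 𝓕₂ n) (h2 : ∀ n, 𝓕₂ n ≤ mΩ n)
    (M I : ℕ → ℕ) (hI : ∀ n, 0 < I n)
    (F Fstar : ∀ n, Fin (M n) → Ω n → ℝ)
    (hFint : ∀ n m, Integrable (F n m) (μ n))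
    (hFmeas : ∀ n m, StronglyMeasurable[𝓕₁ n] (F n m))
    (hFstarint : ∀ n m, Integrable (Fstar n m) (μ n))
    (hFstarmeas : ∀ n m, StronglyMeasurable[𝓕₂ n] (Fstar n m))
    (π : ∀ n, Fin (I n) → Ω n → Fin (M n))
    (hπmeas : ∀ n l, Measurable (π n l))
    (hunif : ∀ n l m, μ n (π n l ⁻¹' {m}) = (M n : ENNReal)⁻¹)
    (hindep : ∀ n,
      Indep (⨆ l, MeasurableSpace.comap (π n l) inferInstance) (𝓕₂ n) (μ n))
    (hbias : ∀ ε : ℝ, 0 < ε →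
      Tendsto (fun n => μ n {ω | ∃ m, ε ≤
          (n : ℝ) * abs (condExp (𝓕₁ n) (μ n) (Fstar n m) ω - F n m ω)})
        atTop (nhds 0)) :
    ∀ ε : ℝ, 0 < ε →
      Tendsto (fun n => μ n {ω | ε ≤
          abs (condExp (𝓕₁ n) (μ n) (fun ω' => Real.sqrt n *
              ((1 / (I n) : ℝ) * ∑ l, Fstar n (π n l ω') ω'
                - (1 / (M n) : ℝ) * ∑ m, F n m ω')) ω)})
        atTop (nhds 0) := by
  intro ε hε
  have hcondExp : ∀ n, condExp (𝓕₁ n) (μ n) (fun ω' => Real.sqrt n *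
      ((1 / (I n) : ℝ) * ∑ l, Fstar n (π n l ω') ω' - (1 / (M n) : ℝ) * ∑ m, F n m ω'))
      =ᵐ[μ n] fun ω => Real.sqrt n *
        ((M n : ℝ)⁻¹ * ∑ m, (condExp (𝓕₁ n) (μ n) (Fstar n m) ω - F n m ω)) := fun n =>
    condExp_mul_mean_comp_sub_mean _ (hI n) (h12 n) (h2 n)
      -- `hπmeas` is measurability for `𝓕₂ n`, the last `MeasurableSpace` bound before it.
      (fun l => (hπmeas n l).mono (h2 n) le_rfl) (hunif n)
      (fun l => indep_of_indep_of_le_left (hindep n)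
        (le_iSup (fun l => MeasurableSpace.comap (π n l) inferInstance) l))
      (hFint n) (hFmeas n) (hFstarint n) (hFstarmeas n)
  refine tendsto_of_tendsto_of_tendsto_of_le_of_le' tendsto_const_nhds (hbias ε hε)
    (.of_forall fun n => zero_le) ?_
  filter_upwards [eventually_ge_atTop 1] with n hn
  refine measure_mono_ae ?_
  filter_upwards [hcondExp n] with ω hω hmem
  exact exists_le_mul_abs_of_le_abs_sqrt_mul_mean hn hε (by rwa [← hω])

/-- if the conditional biases `Rₙᵐ = E(F̂*ⁿ,ᵐ | 𝓕₁ⁿ) − F̂ⁿ,ᵐ`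
satisfy `max_m n·|Rₙᵐ| → 0` in probability, then
`E(√n·(F̄*_{I(n)} − F̄_{M(n)}) | 𝓕₁ⁿ) → 0` in probability. -/
theorem condexp_wbmi_tendsto_zero_inProb
    (Ω : ℕ → Type*) [mΩ : ∀ n, MeasurableSpace (Ω n)]
    (μ : ∀ n, Measure (Ω n)) [∀ n, IsProbabilityMeasure (μ n)]
    (𝓕₁ 𝓕₂ : ∀ n, MeasurableSpace (Ω n))
    (h12 : ∀ n, 𝓕₁ n ≤ 𝓕₂ n) (h2 : ∀ n, 𝓕₂ n ≤ mΩ n)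
    (M I : ℕ → ℕ) (hI : ∀ n, 0 < I n) (hIM : ∀ n, I n ≤ M n)
    (F Fstar : ∀ n, Fin (M n) → Ω n → ℝ)
    (hFint : ∀ n m, Integrable (F n m) (μ n))
    (hFmeas : ∀ n m, StronglyMeasurable[𝓕₁ n] (F n m))
    (hFstarint : ∀ n m, Integrable (Fstar n m) (μ n))
    (hFstarmeas : ∀ n m, StronglyMeasurable[𝓕₂ n] (Fstar n m))
    (π : ∀ n, Fin (I n) → Ω n → Fin (M n))
    (hπmeas : ∀ n l, Measurable (π n l))
    (hiid : ∀ n, iIndepFun (π n) (μ n))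
    (hunif : ∀ n l m, μ n (π n l ⁻¹' {m}) = (M n : ENNReal)⁻¹)
    (hindep : ∀ n,
      Indep (⨆ l, MeasurableSpace.comap (π n l) inferInstance) (𝓕₂ n) (μ n))
    (hbias : ∀ ε : ℝ, 0 < ε →
      Tendsto (fun n => μ n {ω | ∃ m, ε ≤
          (n : ℝ) * abs (condExp (𝓕₁ n) (μ n) (Fstar n m) ω - F n m ω)})
        atTop (nhds 0)) :
    ∀ ε : ℝ, 0 < ε →
      Tendsto (fun n => μ n {ω | ε ≤
          abs (condExp (𝓕₁ n) (μ n) (fun ω' => Real.sqrt n *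
              ((1 / (I n) : ℝ) * ∑ l, Fstar n (π n l ω') ω'
                - (1 / (M n) : ℝ) * ∑ m, F n m ω')) ω)})
        atTop (nhds 0) :=
  condexp_wbmi_tendsto_zero_inProb_general Ω (mΩ := mΩ) μ 𝓕₁ 𝓕₂ h12 h2 M I hI F Fstar hFint hFmeas
    hFstarint hFstarmeas π hπmeas hunif hindep hbias
end

section
/- (Theorem 3.1, expectation part.) Consider a triangular array: for each n, a probability space carrying sub-σ-algebras 𝓕₁ⁿ ⊆ 𝓕₂ⁿ, integrable, identically distributed 𝓕₁ⁿ-measurable random variables F̂ⁿ,¹,…,F̂ⁿ,ᴹ⁽ⁿ⁾, integrable 𝓕₂ⁿ-measurable random variables F̂*ⁿ,¹,…,F̂*ⁿ,ᴹ⁽ⁿ⁾, and selection indices π(1),…,π(I(n)) i.i.d. uniform on {1,…,M(n)} independent of 𝓕₂ⁿ, with I(n) ≤ M(n). Let F₁ ∈ ℝ. Assume: (3.1) n·(E(F̂ⁿ,¹) − F₁) → 0 as n → ∞; and (3.2) writing Rₙᵐ = E(F̂*ⁿ,ᵐ | 𝓕₁ⁿ) − F̂ⁿ,ᵐ, one has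 max_{1 ≤ m ≤ M(n)} n·|Rₙᵐ| → 0 in probability and max_{1 ≤ m ≤ M(n)} n·E|Rₙᵐ| → 0. Set F̄_{M(n)} = (1/M(n))Σ_m F̂ⁿ,ᵐ, F̄_{I(n)} = (1/I(n))Σ_l F̂ⁿ,π(l), F̄*_{I(n)} = (1/I(n))Σ_l F̂*ⁿ,π(l). Then E( √n·(F̄*_{I(n)} − F̄_{M(n)}) | 𝓕₁ⁿ ) − E( √n·(F̄_{I(n)} − F₁) ) → 0 in probability as n → ∞. -/
/-!
The selection indices are uniform on the imputations and independent of `𝓕₂ⁿ`, so averaging over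
them turns every resampled term into the plain average over all `M(n)` imputations, both in
expectation and conditionally on `𝓕₁ⁿ`. Hence `E(√n (F̄*_I - F̄_M) | 𝓕₁ⁿ) = √n (1/M) ∑ₘ Rₙᵐ`
almost surely, which is at most `maxₘ n |Rₙᵐ|` and tends to `0` in probability by (3.2), while
identical distribution gives `E(√n (F̄_I - F₁)) = √n (E F̂ⁿ,¹ - F₁)`, which is at most
`n |E F̂ⁿ,¹ - F₁| → 0` by (3.1).
-/

open MeasureTheory ProbabilityTheory Finset Filter
open scoped ENNReal

lemma comp_index_eq_sum_indicator {Ω ι : Type*} [Fintype ι] (p : Ω → ι) (X : ι → Ω → ℝ) :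
    (fun ω => X (p ω) ω) = fun ω => ∑ i, (p ⁻¹' {i}).indicator (X i) ω := by
  classical
  ext ω
  simp [Set.indicator_apply]

lemma integrable_comp_index {Ω ι : Type*} [Fintype ι] [MeasurableSpace ι]
    [MeasurableSingletonClass ι] {mΩ : MeasurableSpace Ω} {μ : Measure[mΩ] Ω} {p : Ω → ι}
    {X : ι → Ω → ℝ} (hp : Measurable p) (hX : ∀ i, Integrable (X i) μ) :
    Integrable (fun ω => X (p ω) ω) μ := by
  rw [comp_index_eq_sum_indicator]
  exact integrable_finsetSum _ fun i _ => (hX i).indicator (hp (measurableSet_singleton i))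

lemma integrable_resampledMean {Ω ι J : Type*} [Fintype ι] [MeasurableSpace ι]
    [MeasurableSingletonClass ι] [Fintype J] {mΩ : MeasurableSpace Ω} {μ : Measure[mΩ] Ω}
    {p : J → Ω → ι} {X : ι → Ω → ℝ} (hp : ∀ j, Measurable (p j)) (hX : ∀ i, Integrable (X i) μ) :
    Integrable (fun ω => (Fintype.card J : ℝ)⁻¹ * ∑ j, X (p j ω) ω) μ :=
  (integrable_finsetSum _ fun j _ => integrable_comp_index (hp j) hX).const_mul _

lemma average_integral_eq_of_identDistrib {Ω ι : Type*} [Fintype ι] {mΩ : MeasurableSpace Ω}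
    {μ : Measure[mΩ] Ω} {X : ι → Ω → ℝ} {i₀ : ι} (h : ∀ i, IdentDistrib (X i) (X i₀) μ μ) :
    (Fintype.card ι : ℝ)⁻¹ * ∑ i, ∫ ω, X i ω ∂μ = ∫ ω, X i₀ ω ∂μ := by
  have : Nonempty ι := ⟨i₀⟩
  rw [Finset.sum_congr rfl fun i _ => (h i).integral_eq, Finset.sum_const, Finset.card_univ,
    nsmul_eq_mul, inv_mul_cancel_left₀ (by exact_mod_cast Fintype.card_ne_zero)]

/-- `p` is a random index, uniformly distributed on `ι` and independent of the σ-algebra `m`. -/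
structure IsUniformIndex {Ω ι : Type*} [Fintype ι] [MeasurableSpace ι] {mΩ : MeasurableSpace Ω}
    (p : Ω → ι) (m : MeasurableSpace Ω) (μ : Measure[mΩ] Ω) : Prop where
  measurable : Measurable[mΩ] p
  indep : Indep (MeasurableSpace.comap p ‹_›) m μ
  measure_preimage_singleton : ∀ i, μ (p ⁻¹' {i}) = (Fintype.card ι : ℝ≥0∞)⁻¹

namespace IsUniformIndex

variable {Ω ι J : Type*} [Fintype ι] [MeasurableSpace ι] [MeasurableSingletonClass ι]
  [Fintype J] [Nonempty J]
  {m₁ m₂ mΩ : MeasurableSpace Ω} {μ : Measure[mΩ] Ω}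
  {p : Ω → ι} {X Y : ι → Ω → ℝ}

lemma integral_comp (hp : IsUniformIndex p m₂ μ) (hX : ∀ i, Integrable (X i) μ)
    (hXm : ∀ i, StronglyMeasurable[m₂] (X i)) :
    ∫ ω, X (p ω) ω ∂μ = (Fintype.card ι : ℝ)⁻¹ * ∑ i, ∫ ω, X i ω ∂μ := by
  have hpi : ∀ i, MeasurableSet[MeasurableSpace.comap p ‹_›] (p ⁻¹' {i}) :=
    fun i => ⟨{i}, measurableSet_singleton i, rfl⟩
  rw [comp_index_eq_sum_indicator, integral_finsetSum _
    fun i _ => (hX i).indicator (hp.measurable (measurableSet_singleton i)), Finset.mul_sum]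
  refine Finset.sum_congr rfl fun i _ => ?_
  have hindep := indep_of_indep_of_le_right hp.indep (hXm i).measurable.comap_le
  have hindicator := hindep.setIntegral_eq_mul (f := id) hp.measurable.comap_le
    (hX i).aemeasurable (hpi i) measurable_id.aestronglyMeasurable
  rw [integral_indicator (hp.measurable (measurableSet_singleton i))]
  simpa [measureReal_def, hp.measure_preimage_singleton] using hindicator

lemma setIntegral_comp (hp : IsUniformIndex p m₂ μ) (hm₂ : m₂ ≤ mΩ)
    (hX : ∀ i, Integrable (X i) μ) (hXm : ∀ i, StronglyMeasurable[m₂] (X i)) {s : Set Ω}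
    (hs : MeasurableSet[m₂] s) :
    ∫ ω in s, X (p ω) ω ∂μ = (Fintype.card ι : ℝ)⁻¹ * ∑ i, ∫ ω in s, X i ω ∂μ := by
  simp_rw [← integral_indicator (hm₂ s hs)]
  exact hp.integral_comp (X := fun i => s.indicator (X i))
    (fun i => (hX i).indicator (hm₂ s hs)) fun i => (hXm i).indicator hs

lemma setIntegral_resampledMean {p : J → Ω → ι} (hp : ∀ j, IsUniformIndex (p j) m₂ μ)
    (hm₂ : m₂ ≤ mΩ) (hX : ∀ i, Integrable (X i) μ) (hXm : ∀ i, StronglyMeasurable[m₂] (X i))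
    {s : Set Ω} (hs : MeasurableSet[m₂] s) :
    ∫ ω in s, (Fintype.card J : ℝ)⁻¹ * ∑ j, X (p j ω) ω ∂μ
      = (Fintype.card ι : ℝ)⁻¹ * ∑ i, ∫ ω in s, X i ω ∂μ := by
  rw [integral_const_mul, integral_finsetSum _
    fun j _ => (integrable_comp_index (hp j).measurable hX).integrableOn]
  simp_rw [(hp _).setIntegral_comp hm₂ hX hXm hs, Finset.sum_const, Finset.card_univ,
    nsmul_eq_mul]
  field_simp

lemma integral_resampledMean {p : J → Ω → ι} (hp : ∀ j, IsUniformIndex (p j) m₂ μ)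
    (hm₂ : m₂ ≤ mΩ) (hX : ∀ i, Integrable (X i) μ) (hXm : ∀ i, StronglyMeasurable[m₂] (X i)) :
    ∫ ω, (Fintype.card J : ℝ)⁻¹ * ∑ j, X (p j ω) ω ∂μ
      = (Fintype.card ι : ℝ)⁻¹ * ∑ i, ∫ ω, X i ω ∂μ := by
  simpa using setIntegral_resampledMean hp hm₂ hX hXm MeasurableSet.univ

lemma condExp_resampledMean [IsFiniteMeasure μ] {p : J → Ω → ι}
    (hp : ∀ j, IsUniformIndex (p j) m₂ μ) (hm₁₂ : m₁ ≤ m₂) (hm₂ : m₂ ≤ mΩ)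
    (hY : ∀ i, Integrable (Y i) μ) (hYm : ∀ i, StronglyMeasurable[m₂] (Y i)) :
    μ[fun ω => (Fintype.card J : ℝ)⁻¹ * ∑ j, Y (p j ω) ω | m₁]
      =ᵐ[μ] fun ω => (Fintype.card ι : ℝ)⁻¹ * ∑ i, μ[Y i | m₁] ω := by
  have hm₁ := hm₁₂.trans hm₂
  refine (ae_eq_condExp_of_forall_setIntegral_eq hm₁ ?_ (fun s _ _ => ?_)
    (fun s hs _ => ?_) ?_).symm
  · exact integrable_resampledMean (fun j => (hp j).measurable) hY
  · exact ((integrable_finsetSum _ fun i _ => integrable_condExp).const_mul _).integrableOn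
  · rw [setIntegral_resampledMean hp hm₂ hY hYm (hm₁₂ s hs), integral_const_mul,
      integral_finsetSum _ fun i _ => integrable_condExp.integrableOn]
    simp_rw [setIntegral_condExp hm₁ (hY _) hs]
  · exact ((Finset.stronglyMeasurable_fun_sum _
      fun i _ => stronglyMeasurable_condExp).const_mul _).aestronglyMeasurable

lemma condExp_resampledMean_sub_mean [IsFiniteMeasure μ] {p : J → Ω → ι}
    (hp : ∀ j, IsUniformIndex (p j) m₂ μ) (hm₁₂ : m₁ ≤ m₂) (hm₂ : m₂ ≤ mΩ)
    (hY : ∀ i, Integrable (Y i) μ) (hYm : ∀ i, StronglyMeasurable[m₂] (Y i))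
    (hX : ∀ i, Integrable (X i) μ) (hXm : ∀ i, StronglyMeasurable[m₁] (X i)) (c : ℝ) :
    μ[fun ω => c * ((Fintype.card J : ℝ)⁻¹ * ∑ j, Y (p j ω) ω
        - (Fintype.card ι : ℝ)⁻¹ * ∑ i, X i ω) | m₁]
      =ᵐ[μ] fun ω => c * ((Fintype.card ι : ℝ)⁻¹ * ∑ i, (μ[Y i | m₁] ω - X i ω)) := by
  set resampled : Ω → ℝ := fun ω => (Fintype.card J : ℝ)⁻¹ * ∑ j, Y (p j ω) ω
  set mean : Ω → ℝ := fun ω => (Fintype.card ι : ℝ)⁻¹ * ∑ i, X i ω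
  have hresampled : Integrable resampled μ :=
    integrable_resampledMean (fun j => (hp j).measurable) hY
  have hmean_int : Integrable mean μ := (integrable_finsetSum _ fun i _ => hX i).const_mul _
  have hmean : μ[mean | m₁] = mean :=
    condExp_of_stronglyMeasurable (hm₁₂.trans hm₂)
      ((Finset.stronglyMeasurable_fun_sum _ fun i _ => hXm i).const_mul _) hmean_int
  change μ[c • (resampled - mean) | m₁] =ᵐ[μ] _
  filter_upwards [condExp_smul c (resampled - mean) m₁, condExp_sub hresampled hmean_int m₁,
    condExp_resampledMean hp hm₁₂ hm₂ hY hYm] with ω hc hs hr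
  rw [hc, Pi.smul_apply, hs, Pi.sub_apply, hr, hmean, smul_eq_mul, Finset.sum_sub_distrib]
  ring

lemma integral_const_mul_resampledMean_sub [IsProbabilityMeasure μ] {p : J → Ω → ι}
    (hp : ∀ j, IsUniformIndex (p j) m₂ μ) (hm₂ : m₂ ≤ mΩ) (hX : ∀ i, Integrable (X i) μ)
    (hXm : ∀ i, StronglyMeasurable[m₂] (X i)) {i₀ : ι}
    (hident : ∀ i, IdentDistrib (X i) (X i₀) μ μ) (c a : ℝ) :
    ∫ ω, c * ((Fintype.card J : ℝ)⁻¹ * ∑ j, X (p j ω) ω - a) ∂μ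
      = c * ((∫ ω, X i₀ ω ∂μ) - a) := by
  rw [integral_const_mul, integral_sub (integrable_resampledMean (fun j => (hp j).measurable) hX)
    (integrable_const a), integral_resampledMean hp hm₂ hX hXm,
    average_integral_eq_of_identDistrib hident, integral_const, probReal_univ, one_smul]

end IsUniformIndex

lemma sqrt_natCast_le (n : ℕ) : Real.sqrt n ≤ n :=
  Real.sqrt_le_self_iff.2 (by rcases n with _ | n <;> simp)

lemma tendsto_sqrt_mul_of_tendsto_natCast_mul {d : ℕ → ℝ}
    (h : Tendsto (fun n : ℕ => (n : ℝ) * d n) atTop (nhds 0)) :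
    Tendsto (fun n : ℕ => Real.sqrt n * d n) atTop (nhds 0) := by
  refine squeeze_zero_norm (fun n => ?_) (by simpa using h.norm)
  rw [norm_mul, Real.norm_of_nonneg (Real.sqrt_nonneg _), Real.norm_eq_abs]
  gcongr
  exact sqrt_natCast_le n

lemma exists_abs_average_le_abs {ι : Type*} [Fintype ι] [Nonempty ι] (r : ι → ℝ) :
    ∃ i, |(Fintype.card ι : ℝ)⁻¹ * ∑ j, r j| ≤ |r i| := by
  have hcard : (Fintype.card ι : ℝ) ≠ 0 := by exact_mod_cast Fintype.card_ne_zero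
  have hsum : ∑ _i : ι, |(Fintype.card ι : ℝ)⁻¹ * ∑ j, r j| ≤ ∑ i, |r i| := by
    rw [Finset.sum_const, Finset.card_univ, nsmul_eq_mul, abs_mul, abs_inv, Nat.abs_cast,
      mul_inv_cancel_left₀ hcard]
    exact Finset.abs_sum_le_sum_abs _ _
  obtain ⟨i, -, hi⟩ := Finset.exists_le_of_sum_le univ_nonempty hsum
  exact ⟨i, hi⟩

lemma exists_le_mul_abs_of_le_abs_mul_average_sub {ι : Type*} [Fintype ι] [Nonempty ι]
    {r : ι → ℝ} {a b c ε : ℝ} (ha : 0 ≤ a) (hac : a ≤ c) (hb : |b| < ε / 2)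
    (h : ε ≤ |a * ((Fintype.card ι : ℝ)⁻¹ * ∑ i, r i) - b|) : ∃ i, ε / 2 ≤ c * |r i| := by
  obtain ⟨i, hi⟩ := exists_abs_average_le_abs r
  refine ⟨i, ?_⟩
  have := abs_sub (a * ((Fintype.card ι : ℝ)⁻¹ * ∑ i, r i)) b
  rw [abs_mul, abs_of_nonneg ha] at this
  nlinarith [abs_nonneg (r i)]

theorem thm31_expectation_part_general
    (Ω : ℕ → Type*) [mΩ : ∀ n, MeasurableSpace (Ω n)]
    (μ : ∀ n, Measure (Ω n)) [∀ n, IsProbabilityMeasure (μ n)]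
    (𝓕₁ 𝓕₂ : ∀ n, MeasurableSpace (Ω n))
    (h12 : ∀ n, 𝓕₁ n ≤ 𝓕₂ n) (h2 : ∀ n, 𝓕₂ n ≤ mΩ n)
    (M I : ℕ → ℕ) (hI : ∀ n, 0 < I n) (hM : ∀ n, 0 < M n)
    (F Fstar : ∀ n, Fin (M n) → Ω n → ℝ)
    (hFint : ∀ n m, Integrable (F n m) (μ n))
    (hFmeas : ∀ n m, StronglyMeasurable[𝓕₁ n] (F n m))
    (hident : ∀ n m, @ProbabilityTheory.IdentDistrib (Ω n) (Ω n) ℝ (mΩ n) (mΩ n) _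
      (F n m) (F n ⟨0, hM n⟩) (μ n) (μ n))
    (hFstarint : ∀ n m, Integrable (Fstar n m) (μ n))
    (hFstarmeas : ∀ n m, StronglyMeasurable[𝓕₂ n] (Fstar n m))
    (π : ∀ n, Fin (I n) → Ω n → Fin (M n))
    (hπmeas : ∀ n l, Measurable (π n l))
    (hunif : ∀ n l m, μ n (π n l ⁻¹' {m}) = (M n : ENNReal)⁻¹)
    (hindep : ∀ n,
      Indep (⨆ l, MeasurableSpace.comap (π n l) inferInstance) (𝓕₂ n) (μ n))
    (F₁ : ℝ)
    -- Assumption (3.1): n·(E(F̂ⁿ,¹) − F₁) → 0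
    (h31 : Tendsto (fun n : ℕ => (n : ℝ) * ((∫ ω, F n ⟨0, hM n⟩ ω ∂(μ n)) - F₁))
      atTop (nhds 0))
    -- Assumption (3.2), in-probability part: max_m n·|Rₙᵐ| → 0 in probability
    (h32p : ∀ ε : ℝ, 0 < ε →
      Tendsto (fun n => μ n {ω | ∃ m, ε ≤
          (n : ℝ) * abs (condExp (𝓕₁ n) (μ n) (Fstar n m) ω - F n m ω)})
        atTop (nhds 0)) :
    ∀ ε : ℝ, 0 < ε →
      Tendsto (fun n => μ n {ω | ε ≤
          abs (condExp (𝓕₁ n) (μ n) (fun ω' => Real.sqrt n *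
                ((1 / (I n) : ℝ) * ∑ l, Fstar n (π n l ω') ω'
                  - (1 / (M n) : ℝ) * ∑ m, F n m ω')) ω
            - ∫ ω', Real.sqrt n *
                ((1 / (I n) : ℝ) * ∑ l, F n (π n l ω') ω' - F₁) ∂(μ n))})
        atTop (nhds 0) := by
  intro ε hε
  have hπ : ∀ n l, IsUniformIndex (π n l) (𝓕₂ n) (μ n) := fun n l =>
    { measurable := (hπmeas n l).mono (h2 n) le_rfl
      indep := indep_of_indep_of_le_left (hindep n)
        (le_iSup (fun l => MeasurableSpace.comap (π n l) inferInstance) l)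
      measure_preimage_singleton := by simpa using hunif n l }
  have : ∀ n, Nonempty (Fin (I n)) := fun n => ⟨⟨0, hI n⟩⟩
  have hcond : ∀ n, condExp (𝓕₁ n) (μ n) (fun ω' => Real.sqrt n *
        ((1 / (I n) : ℝ) * ∑ l, Fstar n (π n l ω') ω' - (1 / (M n) : ℝ) * ∑ m, F n m ω'))
      =ᵐ[μ n] fun ω => Real.sqrt n *
        ((M n : ℝ)⁻¹ * ∑ m, (condExp (𝓕₁ n) (μ n) (Fstar n m) ω - F n m ω)) := fun n => by
    simpa only [Fintype.card_fin, one_div] using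
      IsUniformIndex.condExp_resampledMean_sub_mean (hπ n) (h12 n) (h2 n) (hFstarint n)
        (hFstarmeas n) (hFint n) (hFmeas n) (Real.sqrt n)
  have hbias : ∀ n, ∫ ω', Real.sqrt n * ((1 / (I n) : ℝ) * ∑ l, F n (π n l ω') ω' - F₁) ∂(μ n)
      = Real.sqrt n * ((∫ ω, F n ⟨0, hM n⟩ ω ∂(μ n)) - F₁) := fun n => by
    simpa only [Fintype.card_fin, one_div] using
      IsUniformIndex.integral_const_mul_resampledMean_sub (hπ n) (h2 n) (hFint n)
        (fun m => (hFmeas n m).mono (h12 n)) (hident n) (Real.sqrt n) F₁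
  have hbias_small : ∀ᶠ n : ℕ in atTop,
      |Real.sqrt n * ((∫ ω, F n ⟨0, hM n⟩ ω ∂(μ n)) - F₁)| < ε / 2 :=
    (tendsto_sqrt_mul_of_tendsto_natCast_mul h31).abs.eventually_lt_const
      (by simpa using half_pos hε)
  refine tendsto_of_tendsto_of_tendsto_of_le_of_le' tendsto_const_nhds (h32p (ε / 2) (half_pos hε))
    (Eventually.of_forall fun n => zero_le) ?_
  filter_upwards [hbias_small] with n hn
  refine measure_mono_ae ?_
  filter_upwards [hcond n] with ω hω
  intro (hle : ε ≤ |_ - _|)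
  rw [hω, hbias] at hle
  have : Nonempty (Fin (M n)) := ⟨⟨0, hM n⟩⟩
  exact exists_le_mul_abs_of_le_abs_mul_average_sub (Real.sqrt_nonneg _) (sqrt_natCast_le n) hn
    (by rwa [Fintype.card_fin])

/-- Theorem 3.1, expectation part: under Assumptions (3.1) and
(3.2), `E(√n·(F̄*_{I(n)} − F̄_{M(n)}) | 𝓕₁ⁿ) − E(√n·(F̄_{I(n)} − F₁)) → 0`
in probability as `n → ∞`. -/
theorem thm31_expectation_part
    (Ω : ℕ → Type*) [mΩ : ∀ n, MeasurableSpace (Ω n)]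
    (μ : ∀ n, Measure (Ω n)) [∀ n, IsProbabilityMeasure (μ n)]
    (𝓕₁ 𝓕₂ : ∀ n, MeasurableSpace (Ω n))
    (h12 : ∀ n, 𝓕₁ n ≤ 𝓕₂ n) (h2 : ∀ n, 𝓕₂ n ≤ mΩ n)
    (M I : ℕ → ℕ) (hI : ∀ n, 0 < I n) (hM : ∀ n, 0 < M n) (hIM : ∀ n, I n ≤ M n)
    (F Fstar : ∀ n, Fin (M n) → Ω n → ℝ)
    (hFint : ∀ n m, Integrable (F n m) (μ n))
    (hFmeas : ∀ n m, StronglyMeasurable[𝓕₁ n] (F n m))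
    (hident : ∀ n m, @ProbabilityTheory.IdentDistrib (Ω n) (Ω n) ℝ (mΩ n) (mΩ n) _
      (F n m) (F n ⟨0, hM n⟩) (μ n) (μ n))
    (hFstarint : ∀ n m, Integrable (Fstar n m) (μ n))
    (hFstarmeas : ∀ n m, StronglyMeasurable[𝓕₂ n] (Fstar n m))
    (π : ∀ n, Fin (I n) → Ω n → Fin (M n))
    (hπmeas : ∀ n l, Measurable (π n l))
    (hiid : ∀ n, iIndepFun (π n) (μ n))
    (hunif : ∀ n l m, μ n (π n l ⁻¹' {m}) = (M n : ENNReal)⁻¹)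
    (hindep : ∀ n,
      Indep (⨆ l, MeasurableSpace.comap (π n l) inferInstance) (𝓕₂ n) (μ n))
    (F₁ : ℝ)
    -- Assumption (3.1): n·(E(F̂ⁿ,¹) − F₁) → 0
    (h31 : Tendsto (fun n : ℕ => (n : ℝ) * ((∫ ω, F n ⟨0, hM n⟩ ω ∂(μ n)) - F₁))
      atTop (nhds 0))
    -- Assumption (3.2), in-probability part: max_m n·|Rₙᵐ| → 0 in probability
    (h32p : ∀ ε : ℝ, 0 < ε →
      Tendsto (fun n => μ n {ω | ∃ m, ε ≤
          (n : ℝ) * abs (condExp (𝓕₁ n) (μ n) (Fstar n m) ω - F n m ω)})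
        atTop (nhds 0))
    -- Assumption (3.2), L¹ part: max_m n·E|Rₙᵐ| → 0
    (h32e : ∀ ε : ℝ, 0 < ε → ∀ᶠ n : ℕ in atTop, ∀ m,
      (n : ℝ) * ∫ ω, abs (condExp (𝓕₁ n) (μ n) (Fstar n m) ω - F n m ω) ∂(μ n)
        < ε) :
    ∀ ε : ℝ, 0 < ε →
      Tendsto (fun n => μ n {ω | ε ≤
          abs (condExp (𝓕₁ n) (μ n) (fun ω' => Real.sqrt n *
                ((1 / (I n) : ℝ) * ∑ l, Fstar n (π n l ω') ω'
                  - (1 / (M n) : ℝ) * ∑ m, F n m ω')) ω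
            - ∫ ω', Real.sqrt n *
                ((1 / (I n) : ℝ) * ∑ l, F n (π n l ω') ω' - F₁) ∂(μ n))})
        atTop (nhds 0) :=
  thm31_expectation_part_general Ω (mΩ := mΩ) μ 𝓕₁ 𝓕₂ h12 h2 M I hI hM F Fstar hFint hFmeas hident
    hFstarint hFstarmeas π hπmeas hunif hindep F₁ h31 h32p
end

section
/- On a probability space carrying sub-σ-algebras 𝓕₁ ⊆ 𝓕₂, let F̂¹,…,F̂ᴹ be square-integrable 𝓕₁-measurable real random variables, let F̂*¹,…,F̂*ᴹ be square-integrable 𝓕₂-measurable real random variables, and let π(1),…,π(I) be i.i.d. uniform on {1,…,M}, independent of 𝓕₂, with I ≤ M. Set F̄_M = (1/M)Σ_{m=1}^M F̂ᵐ and F̄*_I = (1/I)Σ_{l=1}^I F̂*^{π(l)}. Then, almost surely, Var( F̄*_I − F̄_M | 𝓕₁ ) = ((I+M−1)/(M²I))·Σ_{m=1}^M Var(F̂*ᵐ | 𝓕₁) + ((I−1)/(M²I))·Σ_{m₁ ≠ m₂} Cov(F̂*^{m₁}, F̂*^{m₂} | 𝓕₁) + (1/(MI))·Σ_{m=1}^M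 ( E(F̂*ᵐ | 𝓕₁) )² − (1/(M²I))·( Σ_{m=1}^M E(F̂*ᵐ | 𝓕₁) )², where Var(Y | 𝓕₁) = E(Y² | 𝓕₁) − (E(Y | 𝓕₁))² and Cov(Y, W | 𝓕₁) = E(YW | 𝓕₁) − E(Y | 𝓕₁)·E(W | 𝓕₁). -/
open MeasureTheory ProbabilityTheory Finset
open scoped ENNReal

/-- Conditional variance: `Var(Y | 𝓕) = E(Y² | 𝓕) − (E(Y | 𝓕))²`. -/
noncomputable def condVar {Ω : Type*} {mΩ : MeasurableSpace Ω}
    (𝓕 : MeasurableSpace Ω) (μ : @Measure Ω mΩ) (Y : Ω → ℝ) : Ω → ℝ :=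
  fun ω => (μ[fun ω' => (Y ω') ^ 2|𝓕]) ω - ((μ[Y|𝓕]) ω) ^ 2

/-- Conditional covariance: `Cov(Y, W | 𝓕) = E(YW | 𝓕) − E(Y | 𝓕)·E(W | 𝓕)`. -/
noncomputable def condCov {Ω : Type*} {mΩ : MeasurableSpace Ω}
    (𝓕 : MeasurableSpace Ω) (μ : @Measure Ω mΩ) (Y W : Ω → ℝ) : Ω → ℝ :=
  fun ω => (μ[fun ω' => Y ω' * W ω'|𝓕]) ω - (μ[Y|𝓕]) ω * (μ[W|𝓕]) ω


lemma myIntegral_indicator_one {Ω : Type*} {mΩ : MeasurableSpace Ω} (μ : Measure Ω)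
    {s : Set Ω} (hs : MeasurableSet s) :
    ∫ x, s.indicator (fun _ => (1 : ℝ)) x ∂μ = (μ s).toReal := by
  rw [integral_indicator_const _ hs, smul_eq_mul, mul_one]
  rfl

section Aux
variable {Ω : Type*} {mΩ : MeasurableSpace Ω} {μ : Measure Ω} [IsProbabilityMeasure μ]
variable {𝓕₁ 𝓕₂ mπ : MeasurableSpace Ω}

lemma myMulL2_integrable {f g : Ω → ℝ} (hf : MemLp f 2 μ) (hg : MemLp g 2 μ) :
    Integrable (fun ω => f ω * g ω) μ := by
  have hpqr : (1 : ℝ≥0∞) / 1 = 1 / 2 + 1 / 2 := by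
    rw [ENNReal.div_add_div_same, div_one]
    norm_num
    rw [ENNReal.div_self] <;> norm_num
  have h : MemLp (f • g) 1 μ := hg.smul hf
  rw [memLp_one_iff_integrable] at h
  exact h

lemma myCondexp_mul_indep (h12 : 𝓕₁ ≤ 𝓕₂) (h2 : 𝓕₂ ≤ mΩ) (hπ : mπ ≤ mΩ)
    (hindep : Indep mπ 𝓕₂ μ) {U V : Ω → ℝ}
    (hU : StronglyMeasurable[mπ] U) (hUbd : ∀ ω, |U ω| ≤ 1)
    (hV : StronglyMeasurable[𝓕₂] V) (hVint : Integrable V μ) :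
    μ[fun ω => U ω * V ω|𝓕₁] =ᵐ[μ] fun ω => (∫ x, U x ∂μ) * (μ[V|𝓕₁]) ω := by
  have hUm : AEStronglyMeasurable[mΩ] U μ := (hU.mono hπ).aestronglyMeasurable
  have hUint : Integrable U μ := by
    refine (integrable_const (1 : ℝ)).mono' hUm (ae_of_all _ fun ω => ?_)
    simpa [Real.norm_eq_abs] using hUbd ω
  have hVU : Integrable (V * U) μ := by
    refine hVint.norm.mono' ((hV.mono h2).aestronglyMeasurable.mul hUm) (ae_of_all _ fun ω => ?_)
    simp only [Pi.mul_apply, norm_mul, Real.norm_eq_abs]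
    calc |V ω| * |U ω| ≤ |V ω| * 1 := mul_le_mul_of_nonneg_left (hUbd ω) (abs_nonneg _)
      _ = |V ω| := mul_one _
  have e1 : μ[V * U|𝓕₂] =ᵐ[μ] V * μ[U|𝓕₂] := condExp_mul_of_stronglyMeasurable_left hV hVU hUint
  have e2 : μ[U|𝓕₂] =ᵐ[μ] fun _ => ∫ x, U x ∂μ := condExp_indep_eq hπ h2 hU hindep
  have e3 : μ[fun ω => U ω * V ω|𝓕₂] =ᵐ[μ] (∫ x, U x ∂μ) • V := by
    have h : (fun ω => U ω * V ω) = V * U := by funext ω; simp [mul_comm]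
    rw [h]
    filter_upwards [e1, e2] with ω h1 h2'
    simp only [Pi.mul_apply] at h1 ⊢
    rw [h1, h2']
    simp [mul_comm, smul_eq_mul]
  calc μ[fun ω => U ω * V ω|𝓕₁]
      =ᵐ[μ] μ[μ[fun ω => U ω * V ω|𝓕₂]|𝓕₁] := (condExp_condExp_of_le h12 h2).symm
    _ =ᵐ[μ] μ[(∫ x, U x ∂μ) • V|𝓕₁] := condExp_congr_ae e3
    _ =ᵐ[μ] (∫ x, U x ∂μ) • μ[V|𝓕₁] := condExp_smul _ _ _
    _ = fun ω => (∫ x, U x ∂μ) * (μ[V|𝓕₁]) ω := by funext ω; simp [smul_eq_mul]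

lemma myCondexp_sum_mul_indep {ι : Type*} [Fintype ι]
    (h12 : 𝓕₁ ≤ 𝓕₂) (h2 : 𝓕₂ ≤ mΩ) (hπ : mπ ≤ mΩ)
    (hindep : Indep mπ 𝓕₂ μ) (U V : ι → Ω → ℝ)
    (hU : ∀ i, StronglyMeasurable[mπ] (U i)) (hUbd : ∀ i ω, |U i ω| ≤ 1)
    (hV : ∀ i, StronglyMeasurable[𝓕₂] (V i)) (hVint : ∀ i, Integrable (V i) μ) :
    μ[fun ω => ∑ i, U i ω * V i ω|𝓕₁] =ᵐ[μ]
      fun ω => ∑ i, (∫ x, U i x ∂μ) * (μ[V i|𝓕₁]) ω := by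
  have hint : ∀ i : ι, Integrable (fun ω => U i ω * V i ω) μ := by
    intro i
    refine (hVint i).norm.mono'
      (((hU i).mono hπ).aestronglyMeasurable.mul ((hV i).mono h2).aestronglyMeasurable)
      (ae_of_all _ fun ω => ?_)
    simp only [norm_mul, Real.norm_eq_abs]
    calc |U i ω| * |V i ω| ≤ 1 * |V i ω| :=
          mul_le_mul_of_nonneg_right (hUbd i ω) (abs_nonneg _)
      _ = |V i ω| := one_mul _
  have h1 : (fun ω => ∑ i, U i ω * V i ω) = ∑ i : ι, fun ω => U i ω * V i ω := by
    funext ω; simp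
  rw [h1]
  have h2' := condExp_finset_sum (s := Finset.univ) (f := fun i (ω : Ω) => U i ω * V i ω)
    (fun i _ => hint i) (m := 𝓕₁)
  refine h2'.trans ?_
  have h3 : ∀ i : ι, μ[fun ω => U i ω * V i ω|𝓕₁] =ᵐ[μ]
      fun ω => (∫ x, U i x ∂μ) * (μ[V i|𝓕₁]) ω :=
    fun i => myCondexp_mul_indep h12 h2 hπ hindep (hU i) (hUbd i) (hV i) (hVint i)
  filter_upwards [ae_all_iff.2 h3] with ω hω
  simp only [Finset.sum_apply]
  exact Finset.sum_congr rfl fun i _ => hω i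

lemma myCondexp_const_mul_sum {ι : Type*} [Fintype ι] (𝓕 : MeasurableSpace Ω) (c : ℝ)
    (f : ι → Ω → ℝ) (hf : ∀ i, Integrable (f i) μ) :
    μ[fun ω => c * ∑ i, f i ω|𝓕] =ᵐ[μ] fun ω => c * ∑ i, (μ[f i|𝓕]) ω := by
  have h1 : (fun ω => c * ∑ i, f i ω) = c • ∑ i : ι, f i := by
    funext ω; simp [smul_eq_mul]
  rw [h1]
  refine (condExp_smul c _ 𝓕).trans ?_
  have h2 := condExp_finset_sum (s := Finset.univ) (f := f) (fun i _ => hf i) (m := 𝓕)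
  filter_upwards [h2] with ω hω
  simp only [Pi.smul_apply, smul_eq_mul, hω, Finset.sum_apply]

end Aux

set_option maxHeartbeats 2000000 in
/-- the conditional variance decomposition of `F̄*_I − F̄_M`
given `𝓕₁` (display (5.13) of the paper). -/
theorem condVar_decomposition
    {Ω : Type*} (𝓕₁ 𝓕₂ : MeasurableSpace Ω) {mΩ : MeasurableSpace Ω} (μ : Measure Ω) [IsProbabilityMeasure μ]
    (h12 : 𝓕₁ ≤ 𝓕₂) (h2 : 𝓕₂ ≤ mΩ)
    (I M : ℕ) (hI : 0 < I) (hM : 0 < M) (hIM : I ≤ M)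
    (F Fstar : Fin M → Ω → ℝ)
    (hFL2 : ∀ m, MemLp (F m) 2 μ)
    (hFmeas : ∀ m, StronglyMeasurable[𝓕₁] (F m))
    (hFstarL2 : ∀ m, MemLp (Fstar m) 2 μ)
    (hFstarmeas : ∀ m, StronglyMeasurable[𝓕₂] (Fstar m))
    (π : Fin I → Ω → Fin M)
    (hπmeas : ∀ l, Measurable (π l))
    (hiid : iIndepFun π μ)
    (hunif : ∀ l m, μ (π l ⁻¹' {m}) = (M : ENNReal)⁻¹)
    (hindep : Indep (⨆ l, MeasurableSpace.comap (π l) inferInstance) 𝓕₂ μ) :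
    ∀ᵐ ω ∂μ,
      condVar 𝓕₁ μ (fun ω' => (1 / I : ℝ) * ∑ l, Fstar (π l ω') ω'
          - (1 / M : ℝ) * ∑ m, F m ω') ω =
        (((I : ℝ) + M - 1) / ((M : ℝ) ^ 2 * I)) *
            ∑ m, condVar 𝓕₁ μ (Fstar m) ω
        + (((I : ℝ) - 1) / ((M : ℝ) ^ 2 * I)) *
            ∑ m₁, ∑ m₂ ∈ Finset.univ.erase m₁,
              condCov 𝓕₁ μ (Fstar m₁) (Fstar m₂) ω
        + (1 / ((M : ℝ) * I)) * ∑ m, ((μ[Fstar m|𝓕₁]) ω) ^ 2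
        - (1 / ((M : ℝ) ^ 2 * I)) * (∑ m, (μ[Fstar m|𝓕₁]) ω) ^ 2 := by
  classical
  set mπ : MeasurableSpace Ω := ⨆ l, MeasurableSpace.comap (π l) inferInstance with hmπ
  have hπle : mπ ≤ mΩ := iSup_le fun l => (hπmeas l).comap_le
  have h1 : 𝓕₁ ≤ mΩ := h12.trans h2
  -- indicator functions
  set ind : Fin I → Fin M → Ω → ℝ := fun l m ω => if π l ω = m then 1 else 0 with hind
  have hind_set : ∀ l m, MeasurableSet[mπ] (π l ⁻¹' {m}) := by
    intro l m
    refine le_iSup (fun l => MeasurableSpace.comap (π l) inferInstance) l _ ?_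
    exact ⟨{m}, measurableSet_singleton m, rfl⟩
  have hind_sm : ∀ l m, StronglyMeasurable[mπ] (ind l m) := by
    intro l m
    have h : ind l m = Set.indicator (π l ⁻¹' {m}) (fun _ => (1 : ℝ)) := by
      funext ω
      simp [hind, Set.indicator_apply]
    rw [h]
    exact stronglyMeasurable_const.indicator (hind_set l m)
  have hind_bd : ∀ l m ω, |ind l m ω| ≤ 1 := by
    intro l m ω
    simp only [hind]
    split <;> simp
  have hEind : ∀ l m, ∫ x, ind l m x ∂μ = (M : ℝ)⁻¹ := by
    intro l m
    have hs : MeasurableSet[mΩ] (π l ⁻¹' {m}) := hπmeas l (measurableSet_singleton m)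
    have h : (fun x => ind l m x) = (π l ⁻¹' {m}).indicator (fun _ => (1 : ℝ)) := by
      funext ω; simp [hind, Set.indicator_apply]
    rw [h, myIntegral_indicator_one μ hs, hunif]
    simp
  have hEind2 : ∀ l₁ l₂, l₁ ≠ l₂ → ∀ m₁ m₂,
      ∫ x, ind l₁ m₁ x * ind l₂ m₂ x ∂μ = (M : ℝ)⁻¹ * (M : ℝ)⁻¹ := by
    intro l₁ l₂ hne m₁ m₂
    have hs : MeasurableSet[mΩ] (π l₁ ⁻¹' {m₁} ∩ π l₂ ⁻¹' {m₂}) :=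
      (hπmeas l₁ (measurableSet_singleton m₁)).inter
        (hπmeas l₂ (measurableSet_singleton m₂))
    have h : (fun x => ind l₁ m₁ x * ind l₂ m₂ x)
        = (π l₁ ⁻¹' {m₁} ∩ π l₂ ⁻¹' {m₂}).indicator (fun _ => (1 : ℝ)) := by
      funext ω
      by_cases ha : π l₁ ω = m₁ <;> by_cases hb : π l₂ ω = m₂ <;>
        simp [hind, Set.indicator_apply, ha, hb]
    have hμ : μ (π l₁ ⁻¹' {m₁} ∩ π l₂ ⁻¹' {m₂}) = (M : ENNReal)⁻¹ * (M : ENNReal)⁻¹ := by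
      rw [(hiid.indepFun hne).measure_inter_preimage_eq_mul {m₁} {m₂}
        (measurableSet_singleton _) (measurableSet_singleton _), hunif, hunif]
    rw [h, myIntegral_indicator_one μ hs, hμ]
    simp [ENNReal.toReal_mul]
  -- the selected functions
  set T : Fin I → Ω → ℝ := fun l ω => Fstar (π l ω) ω with hT
  have hTexp : ∀ l ω, T l ω = ∑ m, ind l m ω * Fstar m ω := by
    intro l ω
    simp [hT, hind, ite_mul, Finset.sum_ite_eq]
  have hTexp2 : ∀ l ω, T l ω * T l ω = ∑ m, ind l m ω * (Fstar m ω * Fstar m ω) := by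
    intro l ω
    simp [hT, hind, ite_mul, Finset.sum_ite_eq]
  have hTexp3 : ∀ l₁ l₂ ω, T l₁ ω * T l₂ ω =
      ∑ q : Fin M × Fin M, (ind l₁ q.1 ω * ind l₂ q.2 ω) * (Fstar q.1 ω * Fstar q.2 ω) := by
    intro l₁ l₂ ω
    rw [hTexp l₁ ω, hTexp l₂ ω, Finset.sum_mul_sum, Fintype.sum_prod_type]
    exact Finset.sum_congr rfl fun m₁ _ => Finset.sum_congr rfl fun m₂ _ => by ring
  -- L² and measurability facts
  have hFstar_sm : ∀ m, AEStronglyMeasurable[mΩ] (Fstar m) μ :=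
    fun m => ((hFstarmeas m).mono h2).aestronglyMeasurable
  have hg2 : ∀ l m, MemLp (fun ω => ind l m ω * Fstar m ω) 2 μ := by
    intro l m
    refine MemLp.of_le (hFstarL2 m)
      (((hind_sm l m).mono hπle).aestronglyMeasurable.mul (hFstar_sm m)) (ae_of_all _ fun ω => ?_)
    simp only [norm_mul, Real.norm_eq_abs]
    calc |ind l m ω| * |Fstar m ω| ≤ 1 * |Fstar m ω| :=
          mul_le_mul_of_nonneg_right (hind_bd l m ω) (abs_nonneg _)
      _ = |Fstar m ω| := one_mul _
  have hT2 : ∀ l, MemLp (T l) 2 μ := by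
    intro l
    have h : T l = fun ω => ∑ m, ind l m ω * Fstar m ω := funext fun ω => hTexp l ω
    rw [h]
    exact memLp_finset_sum _ fun m _ => hg2 l m
  have hT_int : ∀ l, Integrable (T l) μ := fun l => (hT2 l).integrable one_le_two
  have hFstar_int : ∀ m, Integrable (Fstar m) μ := fun m => (hFstarL2 m).integrable one_le_two
  have hVV_sm : ∀ m₁ m₂ : Fin M, StronglyMeasurable[𝓕₂] (fun ω => Fstar m₁ ω * Fstar m₂ ω) :=
    fun m₁ m₂ => (hFstarmeas m₁).mul (hFstarmeas m₂)
  have hVV_int : ∀ m₁ m₂ : Fin M, Integrable (fun ω => Fstar m₁ ω * Fstar m₂ ω) μ :=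
    fun m₁ m₂ => myMulL2_integrable (hFstarL2 m₁) (hFstarL2 m₂)
  have hTce : ∀ l, μ[T l|𝓕₁] =ᵐ[μ] fun ω => (M : ℝ)⁻¹ * ∑ m, (μ[Fstar m|𝓕₁]) ω := by
    intro l
    have h : T l = fun ω => ∑ m, ind l m ω * Fstar m ω := funext fun ω => hTexp l ω
    rw [h]
    refine (myCondexp_sum_mul_indep h12 h2 hπle hindep (ind l) Fstar (hind_sm l)
      (hind_bd l) hFstarmeas hFstar_int).trans ?_
    refine ae_of_all _ fun ω => ?_
    dsimp only
    rw [Finset.mul_sum]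
    exact Finset.sum_congr rfl fun m _ => by rw [hEind l m]
  have hTTdiag : ∀ l, μ[fun ω => T l ω * T l ω|𝓕₁] =ᵐ[μ]
      fun ω => (M : ℝ)⁻¹ * ∑ m, (μ[fun ω' => Fstar m ω' * Fstar m ω'|𝓕₁]) ω := by
    intro l
    have h : (fun ω => T l ω * T l ω) = fun ω => ∑ m, ind l m ω * (Fstar m ω * Fstar m ω) :=
      funext fun ω => hTexp2 l ω
    rw [h]
    refine (myCondexp_sum_mul_indep h12 h2 hπle hindep (ind l)
      (fun m ω => Fstar m ω * Fstar m ω) (hind_sm l) (hind_bd l)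
      (fun m => hVV_sm m m) (fun m => hVV_int m m)).trans ?_
    refine ae_of_all _ fun ω => ?_
    dsimp only
    rw [Finset.mul_sum]
    exact Finset.sum_congr rfl fun m _ => by rw [hEind l m]
  have hTToff : ∀ l₁ l₂, l₁ ≠ l₂ → μ[fun ω => T l₁ ω * T l₂ ω|𝓕₁] =ᵐ[μ]
      fun ω => (M : ℝ)⁻¹ * (M : ℝ)⁻¹ *
        ∑ q : Fin M × Fin M, (μ[fun ω' => Fstar q.1 ω' * Fstar q.2 ω'|𝓕₁]) ω := by
    intro l₁ l₂ hne
    have h : (fun ω => T l₁ ω * T l₂ ω) = fun ω =>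
        ∑ q : Fin M × Fin M, (ind l₁ q.1 ω * ind l₂ q.2 ω) * (Fstar q.1 ω * Fstar q.2 ω) :=
      funext fun ω => hTexp3 l₁ l₂ ω
    rw [h]
    refine (myCondexp_sum_mul_indep h12 h2 hπle hindep
      (fun (q : Fin M × Fin M) ω => ind l₁ q.1 ω * ind l₂ q.2 ω)
      (fun (q : Fin M × Fin M) ω => Fstar q.1 ω * Fstar q.2 ω)
      (fun (q : Fin M × Fin M) => (hind_sm l₁ q.1).mul (hind_sm l₂ q.2))
      (fun (q : Fin M × Fin M) ω => by
        rw [abs_mul]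
        exact mul_le_one₀ (hind_bd _ _ _) (abs_nonneg _) (hind_bd _ _ _))
      (fun (q : Fin M × Fin M) => hVV_sm q.1 q.2)
      (fun (q : Fin M × Fin M) => hVV_int q.1 q.2)).trans ?_
    refine ae_of_all _ fun ω => ?_
    dsimp only
    rw [Finset.mul_sum]
    refine Finset.sum_congr rfl fun q _ => ?_
    rw [hEind2 l₁ l₂ hne q.1 q.2, mul_assoc]
  have hIne : (I : ℝ) ≠ 0 := Nat.cast_ne_zero.2 hI.ne'
  have hMne : (M : ℝ) ≠ 0 := Nat.cast_ne_zero.2 hM.ne'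
  set Ybar : Ω → ℝ := fun ω => (1 / I : ℝ) * ∑ l, T l ω with hYbardef
  set C : Ω → ℝ := fun ω => (1 / M : ℝ) * ∑ m, F m ω with hCdef
  have hYbar2 : MemLp Ybar 2 μ := by
    rw [hYbardef]
    exact (memLp_finset_sum _ fun l _ => hT2 l).const_mul _
  have hC2 : MemLp C 2 μ := by
    rw [hCdef]
    exact (memLp_finset_sum _ fun m _ => hFL2 m).const_mul _
  have hCsm : StronglyMeasurable[𝓕₁] C := by
    rw [hCdef]
    exact (Finset.stronglyMeasurable_fun_sum _ fun m _ => hFmeas m).const_mul _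
  have hYbar_int : Integrable Ybar μ := hYbar2.integrable one_le_two
  have hC_int : Integrable C μ := hC2.integrable one_le_two
  -- conditional expectation of Ybar
  have hY1 : μ[Ybar|𝓕₁] =ᵐ[μ] fun ω => (M : ℝ)⁻¹ * ∑ m, (μ[Fstar m|𝓕₁]) ω := by
    rw [hYbardef]
    refine (myCondexp_const_mul_sum 𝓕₁ _ T hT_int).trans ?_
    filter_upwards [ae_all_iff.2 hTce] with ω hω
    rw [Finset.sum_congr rfl fun l (_ : l ∈ Finset.univ) => hω l, Finset.sum_const,
      Finset.card_univ, Fintype.card_fin, nsmul_eq_mul]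
    field_simp
  -- pointwise expansion of Ybar * Ybar
  have hYsq : ∀ ω, Ybar ω * Ybar ω
      = (1 / I : ℝ) * (1 / I : ℝ) * ∑ p : Fin I × Fin I, T p.1 ω * T p.2 ω := by
    intro ω
    rw [hYbardef]
    dsimp only
    have key : (∑ l, T l ω) * (∑ l, T l ω) = ∑ p : Fin I × Fin I, T p.1 ω * T p.2 ω := by
      rw [Finset.sum_mul_sum, Fintype.sum_prod_type]
    rw [← key]
    ring
  have hcount : ∀ D E : ℝ, (∑ p : Fin I × Fin I, if p.1 = p.2 then D else E)
      = (I : ℝ) * D + ((I : ℝ) * (I : ℝ) - I) * E := by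
    intro D E
    rw [Fintype.sum_prod_type]
    have h1 : ∀ l₁ : Fin I, (∑ l₂ : Fin I, if l₁ = l₂ then D else E)
        = (I : ℝ) * E + (D - E) := by
      intro l₁
      have h2' : (∑ l₂ : Fin I, if l₁ = l₂ then D else E)
          = ∑ l₂ : Fin I, (E + if l₁ = l₂ then D - E else 0) :=
        Finset.sum_congr rfl fun l₂ _ => by split <;> ring
      rw [h2', Finset.sum_add_distrib, Finset.sum_const, Finset.sum_ite_eq, Finset.card_univ,
        Fintype.card_fin, nsmul_eq_mul]
      simp
    rw [Finset.sum_congr rfl fun l₁ (_ : l₁ ∈ Finset.univ) => h1 l₁, Finset.sum_const,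
      Finset.card_univ, Fintype.card_fin, nsmul_eq_mul]
    ring
  -- conditional expectation of Ybar * Ybar
  have hY2 : μ[fun ω => Ybar ω * Ybar ω|𝓕₁] =ᵐ[μ] fun ω =>
      (1 / I : ℝ) * (1 / I : ℝ) *
        ((I : ℝ) * ((M : ℝ)⁻¹ * ∑ m, (μ[fun ω' => Fstar m ω' * Fstar m ω'|𝓕₁]) ω)
          + ((I : ℝ) * (I : ℝ) - I) * ((M : ℝ)⁻¹ * (M : ℝ)⁻¹ *
            ∑ q : Fin M × Fin M, (μ[fun ω' => Fstar q.1 ω' * Fstar q.2 ω'|𝓕₁]) ω)) := by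
    have h : (fun ω => Ybar ω * Ybar ω) = fun ω => (1 / I : ℝ) * (1 / I : ℝ) *
        ∑ p : Fin I × Fin I, (fun (p : Fin I × Fin I) ω => T p.1 ω * T p.2 ω) p ω :=
      funext fun ω => hYsq ω
    rw [h]
    refine (myCondexp_const_mul_sum 𝓕₁ _ _
      (fun (p : Fin I × Fin I) => myMulL2_integrable (hT2 p.1) (hT2 p.2))).trans ?_
    have hper : ∀ p : Fin I × Fin I,
        μ[(fun (p : Fin I × Fin I) ω => T p.1 ω * T p.2 ω) p|𝓕₁] =ᵐ[μ] fun ω =>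
          if p.1 = p.2 then (M : ℝ)⁻¹ * ∑ m, (μ[fun ω' => Fstar m ω' * Fstar m ω'|𝓕₁]) ω
          else (M : ℝ)⁻¹ * (M : ℝ)⁻¹ *
            ∑ q : Fin M × Fin M, (μ[fun ω' => Fstar q.1 ω' * Fstar q.2 ω'|𝓕₁]) ω := by
      intro p
      by_cases hp : p.1 = p.2
      · have := hTTdiag p.2
        rw [hp]
        simpa [hp] using this
      · simpa [hp] using hTToff p.1 p.2 hp
    filter_upwards [ae_all_iff.2 hper] with ω hω
    rw [Finset.sum_congr rfl fun p (_ : p ∈ Finset.univ) => hω p, hcount]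
  -- conditional expectations involving C
  have hP1_int : Integrable (fun ω => Ybar ω * Ybar ω) μ := myMulL2_integrable hYbar2 hYbar2
  have hP2_int : Integrable ((fun ω => 2 * C ω) * Ybar) μ :=
    myMulL2_integrable (hC2.const_mul 2) hYbar2
  have hP3_int : Integrable (fun ω => C ω * C ω) μ := myMulL2_integrable hC2 hC2
  have hCE_C : μ[C|𝓕₁] = C := condExp_of_stronglyMeasurable h1 hCsm hC_int
  have hCE_CC : μ[fun ω => C ω * C ω|𝓕₁] = fun ω => C ω * C ω :=
    condExp_of_stronglyMeasurable h1 (hCsm.mul hCsm) hP3_int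
  have hCE_CY : μ[(fun ω => 2 * C ω) * Ybar|𝓕₁] =ᵐ[μ] (fun ω => 2 * C ω) * μ[Ybar|𝓕₁] :=
    condExp_mul_of_stronglyMeasurable_left (hCsm.const_mul 2) hP2_int hYbar_int
  have hG1 : μ[fun ω' => Ybar ω' - C ω'|𝓕₁] =ᵐ[μ] fun ω => (μ[Ybar|𝓕₁]) ω - C ω := by
    have h : (fun ω' => Ybar ω' - C ω') = Ybar - C := rfl
    rw [h]
    refine (condExp_sub hYbar_int hC_int 𝓕₁).trans ?_
    rw [hCE_C]
    exact Filter.EventuallyEq.rfl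
  have hG2sq : (fun ω => (Ybar ω - C ω) ^ 2)
      = ((fun ω => Ybar ω * Ybar ω) - (fun ω => 2 * C ω) * Ybar) + fun ω => C ω * C ω := by
    funext ω
    simp only [Pi.add_apply, Pi.sub_apply, Pi.mul_apply]
    ring
  have hG2 : μ[fun ω => (Ybar ω - C ω) ^ 2|𝓕₁] =ᵐ[μ] fun ω =>
      (μ[fun ω' => Ybar ω' * Ybar ω'|𝓕₁]) ω - 2 * C ω * (μ[Ybar|𝓕₁]) ω + C ω * C ω := by
    rw [hG2sq]
    refine (condExp_add (hP1_int.sub hP2_int) hP3_int 𝓕₁).trans ?_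
    rw [hCE_CC]
    filter_upwards [condExp_sub hP1_int hP2_int 𝓕₁, hCE_CY] with ω h h'
    simp only [Pi.add_apply, Pi.sub_apply, Pi.mul_apply] at h h' ⊢
    rw [h, h']
  -- assembling everything
  have hsq2 : ∀ m : Fin M,
      μ[fun ω' => Fstar m ω' ^ 2|𝓕₁] = μ[fun ω' => Fstar m ω' * Fstar m ω'|𝓕₁] := by
    intro m
    have h : (fun ω' => Fstar m ω' ^ 2) = fun ω' => Fstar m ω' * Fstar m ω' :=
      funext fun ω' => pow_two _
    rw [h]
  have hGfun : (fun ω' => (1 / I : ℝ) * ∑ l, Fstar (π l ω') ω' - (1 / M : ℝ) * ∑ m, F m ω')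
      = fun ω' => Ybar ω' - C ω' := by
    funext ω'
    simp only [hYbardef, hCdef, hT]
  simp only [_root_.condVar, condCov, hGfun, hsq2]
  filter_upwards [hY1, hY2, hG1, hG2] with ω e1 e2 e3 e4
  have hsplitC : ∑ q : Fin M × Fin M, (μ[fun ω' => Fstar q.1 ω' * Fstar q.2 ω'|𝓕₁]) ω
      = ∑ m, (μ[fun ω' => Fstar m ω' * Fstar m ω'|𝓕₁]) ω
        + ∑ m₁, ∑ m₂ ∈ Finset.univ.erase m₁,
            (μ[fun ω' => Fstar m₁ ω' * Fstar m₂ ω'|𝓕₁]) ω := by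
    rw [Fintype.sum_prod_type, ← Finset.sum_add_distrib]
    exact Finset.sum_congr rfl fun m₁ _ => (Finset.add_sum_erase _ _ (Finset.mem_univ m₁)).symm
  have hsplitA : (∑ m, (μ[Fstar m|𝓕₁]) ω) * (∑ m, (μ[Fstar m|𝓕₁]) ω)
      = ∑ m, (μ[Fstar m|𝓕₁]) ω * (μ[Fstar m|𝓕₁]) ω
        + ∑ m₁, ∑ m₂ ∈ Finset.univ.erase m₁, (μ[Fstar m₁|𝓕₁]) ω * (μ[Fstar m₂|𝓕₁]) ω := by
    rw [Finset.sum_mul_sum, ← Finset.sum_add_distrib]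
    exact Finset.sum_congr rfl fun m₁ _ => (Finset.add_sum_erase _ _ (Finset.mem_univ m₁)).symm
  rw [e4, e3, e1, e2]
  simp only [pow_two, Finset.sum_sub_distrib]
  rw [hsplitC]
  have hR : ∑ m, (μ[Fstar m|𝓕₁]) ω * (μ[Fstar m|𝓕₁]) ω
      = (∑ m, (μ[Fstar m|𝓕₁]) ω) * (∑ m, (μ[Fstar m|𝓕₁]) ω)
        - ∑ m₁, ∑ m₂ ∈ Finset.univ.erase m₁, (μ[Fstar m₁|𝓕₁]) ω * (μ[Fstar m₂|𝓕₁]) ω := by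
    rw [hsplitA]; ring
  rw [hR]
  field_simp
  ring
end

section
/- Consider a triangular array: for each n, a probability space carrying sub-σ-algebras 𝓕₁ⁿ ⊆ 𝓕₂ⁿ, square-integrable 𝓕₁ⁿ-measurable random variables F̂ⁿ,¹,…,F̂ⁿ,ᴹ⁽ⁿ⁾ and square-integrable 𝓕₂ⁿ-measurable random variables F̂*ⁿ,¹,…,F̂*ⁿ,ᴹ⁽ⁿ⁾, and let F₁ ∈ ℝ. Assume: (3.2) writing Rₙᵐ = E(F̂*ⁿ,ᵐ | 𝓕₁ⁿ) − F̂ⁿ,ᵐ, one has max_m n·|Rₙᵐ| → 0 in probability; (3.7) Σ_{m=1}^{M(n)} (F̂ⁿ,ᵐ − F₁) = Aₙ + Bₙ with (Aₙ·M(n)^{−1/2}) and (Bₙ·n^{1/2}·M(n)^{−1}) bounded in probability; (3.8) Σ_{m=1}^{M(n)} ((F̂ⁿ,ᵐ)² − F₁²) = A′ₙ + B′ₙ with (A′ₙ·M(n)^{−1/2}) and (B′ₙ·n^{1/2}·M(n)^{−1}) bounded in probability; (3.9) n/I(n)² → 0; (3.10) I(n)²/M(n) is bounded. Then n·[ (1/(M(n)I(n)))·Σ_{m=1}^{M(n)}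 ( E(F̂*ⁿ,ᵐ | 𝓕₁ⁿ) )² − (1/(M(n)²I(n)))·( Σ_{m=1}^{M(n)} E(F̂*ⁿ,ᵐ | 𝓕₁ⁿ) )² ] → 0 in probability as n → ∞. -/
open MeasureTheory ProbabilityTheory Finset Filter

/-- A triangular array of real random variables is bounded in probability
(`O_p(1)`): for every `ε > 0` there is `K > 0` such that
`P(|Xₙ| ≥ K) ≤ ε` for all `n`. -/
def BddInProb (Ω : ℕ → Type*) [∀ n, MeasurableSpace (Ω n)]
    (μ : ∀ n, Measure (Ω n)) (X : ∀ n, Ω n → ℝ) : Prop :=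
  ∀ ε : ℝ, 0 < ε → ∃ K : ℝ, 0 < K ∧
    ∀ n, μ n {ω | K ≤ abs (X n ω)} ≤ ENNReal.ofReal ε

/-! The rescaled quantity is `n / (M I)` times the sum of squared deviations of the
`E(F̂*ⁿ,ᵐ | 𝓕₁ⁿ)` about their mean, which is at most their sum of squared deviations about `F₁`.
Writing `E(F̂*ⁿ,ᵐ | 𝓕₁ⁿ) = F̂ⁿ,ᵐ + Rₙᵐ`, this is at most twice `Σ (F̂ⁿ,ᵐ - F₁)² + Σ (Rₙᵐ)²`, and
`Σ (F̂ⁿ,ᵐ - F₁)² = Σ ((F̂ⁿ,ᵐ)² - F₁²) - 2 F₁ Σ (F̂ⁿ,ᵐ - F₁)` is controlled by (3.7) and (3.8).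
After multiplying by `n / (M I)`, the `O_p` terms of (3.7) and (3.8) come with the factors
`n / (I √M)` and `√n / I`, which tend to zero by (3.9) and (3.10), while
`n / (M I) · Σ (Rₙᵐ)² ≤ max_m (n |Rₙᵐ|)²` is handled by (3.2). -/

open Topology

section SumSqDev

variable {ι : Type*} [Fintype ι]

noncomputable def sumSqDev (x : ι → ℝ) : ℝ :=
  ∑ i, x i ^ 2 - (∑ i, x i) ^ 2 / Fintype.card ι

theorem sumSqDev_nonneg (x : ι → ℝ) : 0 ≤ sumSqDev x := by
  rcases (Nat.cast_nonneg (Fintype.card ι) : (0 : ℝ) ≤ _).eq_or_lt with hN | hN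
  · rw [sumSqDev, ← hN, div_zero, sub_zero]
    positivity
  · rw [sumSqDev, sub_nonneg, div_le_iff₀ hN, mul_comm]
    exact sq_sum_le_card_mul_sum_sq

theorem sumSqDev_le_sum_sq_sub (x : ι → ℝ) (c : ℝ) :
    sumSqDev x ≤ ∑ i, (x i - c) ^ 2 := by
  cases isEmpty_or_nonempty ι
  · simp [sumSqDev]
  have hN : (0 : ℝ) < Fintype.card ι := by exact_mod_cast Fintype.card_pos
  have hexpand : ∑ i, (x i - c) ^ 2
      = ∑ i, x i ^ 2 - 2 * c * ∑ i, x i + Fintype.card ι * c ^ 2 := by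
    simp only [sub_sq, sum_add_distrib, sum_sub_distrib, sum_const, card_univ, nsmul_eq_mul,
      ← sum_mul, ← mul_sum]
    ring
  have hgap : ∑ i, (x i - c) ^ 2 - sumSqDev x
      = (∑ i, x i - Fintype.card ι * c) ^ 2 / Fintype.card ι := by
    rw [hexpand, sumSqDev]
    field_simp
    ring
  have : 0 ≤ (∑ i, x i - Fintype.card ι * c) ^ 2 / Fintype.card ι := by positivity
  linarith

theorem sumSqDev_le_of_approx (e f : ι → ℝ) (t : ℝ) :
    sumSqDev e ≤ 2 * |∑ i, (f i ^ 2 - t ^ 2)| + 4 * |t| * |∑ i, (f i - t)|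
      + 2 * ∑ i, (e i - f i) ^ 2 := by
  have hcross : -(t * ∑ i, (f i - t)) ≤ |t| * |∑ i, (f i - t)| := by
    rw [← abs_mul]; exact neg_le_abs _
  calc sumSqDev e ≤ ∑ i, (e i - t) ^ 2 := sumSqDev_le_sum_sq_sub e t
    _ ≤ ∑ i, 2 * ((f i - t) ^ 2 + (e i - f i) ^ 2) := by
      gcongr with i
      calc (e i - t) ^ 2 = ((f i - t) + (e i - f i)) ^ 2 := by ring
        _ ≤ _ := add_sq_le
    _ = 2 * ∑ i, (f i ^ 2 - t ^ 2) - 4 * (t * ∑ i, (f i - t)) + 2 * ∑ i, (e i - f i) ^ 2 := by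
      simp only [mul_sum, ← sum_sub_distrib, ← sum_add_distrib]
      congr 1 with i
      ring
    _ ≤ _ := by linarith [le_abs_self (∑ i, (f i ^ 2 - t ^ 2))]

theorem div_mul_sum_sq_sub_eq_sumSqDev (e : ι → ℝ) (I : ℝ) :
    1 / (Fintype.card ι * I) * ∑ i, e i ^ 2 - 1 / ((Fintype.card ι : ℝ) ^ 2 * I) * (∑ i, e i) ^ 2
      = sumSqDev e / (Fintype.card ι * I) := by
  rw [sumSqDev]
  ring

theorem mul_abs_div_mul_sum_sq_sub_le (e f : ι → ℝ) (t : ℝ) {n I : ℝ} (hn : 0 ≤ n) (hI : 0 ≤ I) :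
    n * |1 / (Fintype.card ι * I) * ∑ i, e i ^ 2
        - 1 / ((Fintype.card ι : ℝ) ^ 2 * I) * (∑ i, e i) ^ 2|
      ≤ 2 * |n / (Fintype.card ι * I) * ∑ i, (f i ^ 2 - t ^ 2)|
        + 4 * |t| * |n / (Fintype.card ι * I) * ∑ i, (f i - t)|
        + 2 * (n / (Fintype.card ι * I) * ∑ i, (e i - f i) ^ 2) := by
  have hc : 0 ≤ n / (Fintype.card ι * I) := by positivity
  rw [div_mul_sum_sq_sub_eq_sumSqDev, abs_of_nonneg (by have := sumSqDev_nonneg e; positivity),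
    abs_mul, abs_mul, abs_of_nonneg hc]
  calc n * (sumSqDev e / (Fintype.card ι * I)) = n / (Fintype.card ι * I) * sumSqDev e := by ring
    _ ≤ n / (Fintype.card ι * I) * (2 * |∑ i, (f i ^ 2 - t ^ 2)| + 4 * |t| * |∑ i, (f i - t)|
      + 2 * ∑ i, (e i - f i) ^ 2) := mul_le_mul_of_nonneg_left (sumSqDev_le_of_approx e f t) hc
    _ = _ := by ring

theorem div_mul_sum_sq_le_sq_of_mul_abs_lt {n : ℕ} {I δ : ℝ} (hI : 1 ≤ I) (r : ι → ℝ)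
    (hr : ∀ i, n * |r i| < δ) :
    n / (Fintype.card ι * I) * ∑ i, r i ^ 2 ≤ δ ^ 2 := by
  have hterm : ∀ i, n * r i ^ 2 ≤ δ ^ 2 := fun i => by
    have hn : (n : ℝ) ≤ (n : ℝ) ^ 2 := by exact_mod_cast Nat.le_self_pow two_ne_zero n
    calc n * r i ^ 2 ≤ n ^ 2 * r i ^ 2 := by gcongr
      _ = (n * |r i|) ^ 2 := by rw [mul_pow, sq_abs]
      _ ≤ δ ^ 2 := by gcongr; exact (hr i).le
  rw [div_mul_eq_mul_div, mul_sum]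
  refine div_le_of_le_mul₀ (by positivity) (by positivity) ?_
  calc ∑ i, n * r i ^ 2 ≤ ∑ _i : ι, δ ^ 2 := sum_le_sum fun i _ => hterm i
    _ = Fintype.card ι * δ ^ 2 := by simp
    _ ≤ δ ^ 2 * (Fintype.card ι * I) := by
      nlinarith [mul_nonneg (mul_nonneg (Nat.cast_nonneg (Fintype.card ι) : (0 : ℝ) ≤ _)
        (sq_nonneg δ)) (sub_nonneg.2 hI)]

end SumSqDev

def TendstoZeroInProb (Ω : ℕ → Type*) [∀ n, MeasurableSpace (Ω n)]
    (μ : ∀ n, Measure (Ω n)) (X : ∀ n, Ω n → ℝ) : Prop :=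
  ∀ ε : ℝ, 0 < ε → Tendsto (fun n => μ n {ω | ε ≤ |X n ω|}) atTop (𝓝 0)

namespace TendstoZeroInProb

variable {Ω : ℕ → Type*} {mΩ : ∀ n, MeasurableSpace (Ω n)} {μ : ∀ n, Measure (Ω n)}
  {X Y : ∀ n, Ω n → ℝ}

theorem tendsto_measure_setOf_le_of_le (hY : TendstoZeroInProb Ω μ Y)
    (h : ∀ n ω, X n ω ≤ Y n ω) (ε : ℝ) (hε : 0 < ε) :
    Tendsto (fun n => μ n {ω | ε ≤ X n ω}) atTop (𝓝 0) :=
  tendsto_of_tendsto_of_tendsto_of_le_of_le tendsto_const_nhds (hY ε hε) (fun _ => zero_le)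
    fun n => measure_mono fun ω (hω : ε ≤ X n ω) => hω.trans ((h n ω).trans (le_abs_self _))

theorem of_abs_le (hY : TendstoZeroInProb Ω μ Y) (h : ∀ n ω, |X n ω| ≤ Y n ω) :
    TendstoZeroInProb Ω μ X :=
  hY.tendsto_measure_setOf_le_of_le h

theorem abs (hX : TendstoZeroInProb Ω μ X) : TendstoZeroInProb Ω μ fun n ω => |X n ω| := by
  simpa only [TendstoZeroInProb, abs_abs] using hX

theorem add (hX : TendstoZeroInProb Ω μ X) (hY : TendstoZeroInProb Ω μ Y) :
    TendstoZeroInProb Ω μ fun n ω => X n ω + Y n ω := by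
  intro ε hε
  have hsplit : ∀ n, {ω | ε ≤ |X n ω + Y n ω|} ⊆
      {ω | ε / 2 ≤ |X n ω|} ∪ {ω | ε / 2 ≤ |Y n ω|} := fun n ω (hω : ε ≤ _) => by
    rcases le_or_gt (ε / 2) |X n ω| with hXω | hXω
    · exact Or.inl hXω
    · exact Or.inr (show ε / 2 ≤ |Y n ω| by linarith [abs_add_le (X n ω) (Y n ω)])
  have hlim := (hX (ε / 2) (half_pos hε)).add (hY (ε / 2) (half_pos hε))
  rw [add_zero] at hlim
  exact tendsto_of_tendsto_of_tendsto_of_le_of_le tendsto_const_nhds hlim (fun _ => zero_le)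
    fun n => (measure_mono (hsplit n)).trans (measure_union_le _ _)

theorem const_mul (hX : TendstoZeroInProb Ω μ X) (c : ℝ) :
    TendstoZeroInProb Ω μ fun n ω => c * X n ω := by
  intro ε hε
  have hc : 0 < |c| + 1 := by positivity
  refine tendsto_of_tendsto_of_tendsto_of_le_of_le tendsto_const_nhds
    (hX (ε / (|c| + 1)) (div_pos hε hc)) (fun _ => zero_le) fun n => measure_mono ?_
  intro ω (hω : ε ≤ |c * X n ω|)
  show ε / (|c| + 1) ≤ |X n ω|
  rw [abs_mul] at hω
  rw [div_le_iff₀ hc]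
  nlinarith [abs_nonneg (X n ω)]

end TendstoZeroInProb

theorem BddInProb.mul_tendsto_zero {Ω : ℕ → Type*} {mΩ : ∀ n, MeasurableSpace (Ω n)}
    {μ : ∀ n, Measure (Ω n)} {X : ∀ n, Ω n → ℝ} (hX : BddInProb Ω μ X) {c : ℕ → ℝ}
    (hc : Tendsto c atTop (𝓝 0)) :
    TendstoZeroInProb Ω μ fun n ω => c n * X n ω := by
  intro ε hε
  rw [ENNReal.tendsto_nhds_zero]
  intro η hη
  obtain ⟨ε', hε', hε'η⟩ : ∃ ε' : ℝ, 0 < ε' ∧ ENNReal.ofReal ε' ≤ η := by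
    rcases eq_or_ne η ⊤ with rfl | hη_top
    · exact ⟨1, one_pos, le_top⟩
    · exact ⟨η.toReal, ENNReal.toReal_pos hη.ne' hη_top, ENNReal.ofReal_toReal_le⟩
  obtain ⟨K, hK, hKbound⟩ := hX ε' hε'
  have hsmall : ∀ᶠ n in atTop, |c n| < ε / K := by
    simpa [Real.dist_eq] using Metric.tendsto_nhds.mp hc (ε / K) (div_pos hε hK)
  filter_upwards [hsmall] with n hn
  refine (measure_mono fun ω (hω : ε ≤ |c n * X n ω|) => ?_).trans ((hKbound n).trans hε'η)
  show K ≤ |X n ω|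
  rw [lt_div_iff₀ hK] at hn
  rw [abs_mul] at hω
  by_contra! hlt
  nlinarith [abs_nonneg (c n)]

section Rates

variable {Ω : ℕ → Type*} {mΩ : ∀ n, MeasurableSpace (Ω n)} {μ : ∀ n, Measure (Ω n)}
  {M I : ℕ → ℕ}

theorem tendsto_sqrt_div_of_tendsto_div_sq
    (h : Tendsto (fun n : ℕ => (n : ℝ) / (I n : ℝ) ^ 2) atTop (𝓝 0)) :
    Tendsto (fun n : ℕ => Real.sqrt n / I n) atTop (𝓝 0) := by
  have hsqrt := (Real.continuous_sqrt.tendsto 0).comp h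
  rw [Real.sqrt_zero] at hsqrt
  refine hsqrt.congr fun n => ?_
  simp only [Function.comp_apply, Real.sqrt_div' _ (sq_nonneg _), Real.sqrt_sq (Nat.cast_nonneg _)]

theorem tendsto_div_mul_sqrt_of_tendsto_div_sq (hI : ∀ n, 0 < I n)
    (h : Tendsto (fun n : ℕ => (n : ℝ) / (I n : ℝ) ^ 2) atTop (𝓝 0))
    (hK : ∃ K : ℝ, ∀ n, (I n : ℝ) ^ 2 / M n ≤ K) :
    Tendsto (fun n : ℕ => n / (I n * Real.sqrt (M n))) atTop (𝓝 0) := by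
  obtain ⟨K, hK⟩ := hK
  have hratio : IsBoundedUnder (· ≤ ·) atTop fun n => ‖(I n : ℝ) / Real.sqrt (M n)‖ := by
    refine isBoundedUnder_of ⟨Real.sqrt K, fun n => ?_⟩
    rw [Real.norm_eq_abs, abs_of_nonneg (by positivity), ← Real.sqrt_sq (Nat.cast_nonneg (I n)),
      ← Real.sqrt_div' _ (Nat.cast_nonneg _)]
    exact Real.sqrt_le_sqrt (hK n)
  refine (h.zero_mul_isBoundedUnder_le hratio).congr fun n => ?_
  have : (I n : ℝ) ≠ 0 := by exact_mod_cast (hI n).ne'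
  field_simp

theorem tendstoZeroInProb_div_mul_add (hI : ∀ n, 0 < I n)
    (h : Tendsto (fun n : ℕ => (n : ℝ) / (I n : ℝ) ^ 2) atTop (𝓝 0))
    (hK : ∃ K : ℝ, ∀ n, (I n : ℝ) ^ 2 / M n ≤ K) {A B : ∀ n, Ω n → ℝ}
    (hA : BddInProb Ω μ fun n ω => A n ω / Real.sqrt (M n))
    (hB : BddInProb Ω μ fun n ω => B n ω * Real.sqrt n / M n) :
    TendstoZeroInProb Ω μ fun n ω => n / (M n * I n) * (A n ω + B n ω) := by
  refine ((hA.mul_tendsto_zero (tendsto_div_mul_sqrt_of_tendsto_div_sq hI h hK)).abs.add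
    (hB.mul_tendsto_zero (tendsto_sqrt_div_of_tendsto_div_sq h)).abs).of_abs_le fun n ω => ?_
  calc |n / (M n * I n) * (A n ω + B n ω)| ≤ n / (M n * I n) * (|A n ω| + |B n ω|) := by
        rw [abs_mul, abs_of_nonneg (by positivity)]
        gcongr
        exact abs_add_le _ _
    -- `n / (M I) = n / (I √M) · 1 / √M = √n / I · √n / M`
    _ = _ := by
        simp only [abs_mul, abs_div, abs_of_nonneg (Real.sqrt_nonneg _), Nat.abs_cast]
        have hM := Real.mul_self_sqrt (Nat.cast_nonneg (M n))
        have hn := Real.mul_self_sqrt (Nat.cast_nonneg n)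
        set s := Real.sqrt (M n)
        set t := Real.sqrt n
        rw [← hM, ← hn]
        ring

theorem tendstoZeroInProb_div_mul_sum_sq (hI : ∀ n, 0 < I n) {r : ∀ n, Fin (M n) → Ω n → ℝ}
    (hr : ∀ δ : ℝ, 0 < δ →
      Tendsto (fun n => μ n {ω | ∃ m, δ ≤ (n : ℝ) * |r n m ω|}) atTop (𝓝 0)) :
    TendstoZeroInProb Ω μ fun n ω => n / (M n * I n) * ∑ m, r n m ω ^ 2 := by
  intro ε hε
  refine tendsto_of_tendsto_of_tendsto_of_le_of_le tendsto_const_nhds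
    (hr (Real.sqrt (ε / 2)) (by positivity)) (fun _ => zero_le) fun n => measure_mono ?_
  intro ω (hω : ε ≤ |n / (M n * I n) * ∑ m, r n m ω ^ 2|)
  by_contra hbig
  have hsmall : ∀ m, (n : ℝ) * |r n m ω| < Real.sqrt (ε / 2) :=
    fun m => not_le.mp fun h => hbig ⟨m, h⟩
  have hbound :=
    div_mul_sum_sq_le_sq_of_mul_abs_lt (I := I n) (by exact_mod_cast hI n) (r n · ω) hsmall
  rw [Fintype.card_fin, Real.sq_sqrt (by positivity)] at hbound
  rw [abs_of_nonneg (by positivity)] at hω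
  linarith

end Rates

theorem bias_terms_negligible_general
    (Ω : ℕ → Type*) [mΩ : ∀ n, MeasurableSpace (Ω n)]
    (μ : ∀ n, Measure (Ω n))
    (𝓕₁ : ∀ n, MeasurableSpace (Ω n))
    (M I : ℕ → ℕ) (hI : ∀ n, 0 < I n)
    (F Fstar : ∀ n, Fin (M n) → Ω n → ℝ)
    (F₁ : ℝ)
    -- Assumption (3.2): max_m n·|Rₙᵐ| → 0 in probability
    (h32 : ∀ ε : ℝ, 0 < ε →
      Tendsto (fun n => μ n {ω | ∃ m, ε ≤
          (n : ℝ) * abs (condExp (𝓕₁ n) (μ n) (Fstar n m) ω - F n m ω)})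
        atTop (nhds 0))
    -- Assumption (3.7): Σ_m (F̂ⁿ,ᵐ − F₁) = O_p(M^{1/2}) + O_p(M·n^{−1/2})
    (h37 : ∃ A B : ∀ n, Ω n → ℝ,
      (∀ n ω, ∑ m, (F n m ω - F₁) = A n ω + B n ω) ∧
      @BddInProb Ω mΩ μ (fun n ω => A n ω / Real.sqrt (M n)) ∧
      @BddInProb Ω mΩ μ (fun n ω => B n ω * Real.sqrt n / M n))
    -- Assumption (3.8): Σ_m ((F̂ⁿ,ᵐ)² − F₁²) = O_p(M^{1/2}) + O_p(M·n^{−1/2})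
    (h38 : ∃ A B : ∀ n, Ω n → ℝ,
      (∀ n ω, ∑ m, ((F n m ω) ^ 2 - F₁ ^ 2) = A n ω + B n ω) ∧
      @BddInProb Ω mΩ μ (fun n ω => A n ω / Real.sqrt (M n)) ∧
      @BddInProb Ω mΩ μ (fun n ω => B n ω * Real.sqrt n / M n))
    -- Assumption (3.9): n / I(n)² → 0
    (h39 : Tendsto (fun n : ℕ => (n : ℝ) / (I n : ℝ) ^ 2) atTop (nhds 0))
    -- Assumption (3.10): I(n)² / M(n) is bounded
    (h310 : ∃ K : ℝ, ∀ n, ((I n : ℝ)) ^ 2 / (M n : ℝ) ≤ K) :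
    ∀ ε : ℝ, 0 < ε →
      Tendsto (fun n => μ n {ω | ε ≤ (n : ℝ) * abs
          ((1 / ((M n : ℝ) * (I n : ℝ))) *
              ∑ m, (condExp (𝓕₁ n) (μ n) (Fstar n m) ω) ^ 2
            - (1 / ((M n : ℝ) ^ 2 * (I n : ℝ))) *
              (∑ m, condExp (𝓕₁ n) (μ n) (Fstar n m) ω) ^ 2)})
        atTop (nhds 0) := by
  obtain ⟨A, B, hsum, hA, hB⟩ := h37
  obtain ⟨A', B', hsum_sq, hA', hB'⟩ := h38
  have hmean := tendstoZeroInProb_div_mul_add hI h39 h310 hA hB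
  have hmean_sq := tendstoZeroInProb_div_mul_add hI h39 h310 hA' hB'
  have hremainder := tendstoZeroInProb_div_mul_sum_sq (mΩ := mΩ) hI h32
  have hdom := ((hmean_sq.abs.const_mul 2).add (hmean.abs.const_mul (4 * |F₁|))).add
    (hremainder.const_mul 2)
  refine hdom.tendsto_measure_setOf_le_of_le fun n ω => ?_
  have hbound := mul_abs_div_mul_sum_sq_sub_le (fun m => condExp (𝓕₁ n) (μ n) (Fstar n m) ω)
    (fun m => F n m ω) F₁ (Nat.cast_nonneg n) (Nat.cast_nonneg (I n))
  rwa [Fintype.card_fin, hsum n ω, hsum_sq n ω] at hbound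

/-- under Assumptions (3.2), (3.7), (3.8), (3.9), (3.10), the
'bias' terms of the conditional variance decomposition, rescaled by `n`, are
asymptotically negligible (displays (5.14)/(5.15) of the paper). -/
theorem bias_terms_negligible
    (Ω : ℕ → Type*) [mΩ : ∀ n, MeasurableSpace (Ω n)]
    (μ : ∀ n, Measure (Ω n)) [∀ n, IsProbabilityMeasure (μ n)]
    (𝓕₁ 𝓕₂ : ∀ n, MeasurableSpace (Ω n))
    (h12 : ∀ n, 𝓕₁ n ≤ 𝓕₂ n) (h2 : ∀ n, 𝓕₂ n ≤ mΩ n)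
    (M I : ℕ → ℕ) (hI : ∀ n, 0 < I n) (hIM : ∀ n, I n ≤ M n)
    (F Fstar : ∀ n, Fin (M n) → Ω n → ℝ)
    (hFL2 : ∀ n m, MemLp (F n m) 2 (μ n))
    (hFmeas : ∀ n m, StronglyMeasurable[𝓕₁ n] (F n m))
    (hFstarL2 : ∀ n m, MemLp (Fstar n m) 2 (μ n))
    (hFstarmeas : ∀ n m, StronglyMeasurable[𝓕₂ n] (Fstar n m))
    (F₁ : ℝ)
    -- Assumption (3.2): max_m n·|Rₙᵐ| → 0 in probability
    (h32 : ∀ ε : ℝ, 0 < ε →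
      Tendsto (fun n => μ n {ω | ∃ m, ε ≤
          (n : ℝ) * abs (condExp (𝓕₁ n) (μ n) (Fstar n m) ω - F n m ω)})
        atTop (nhds 0))
    -- Assumption (3.7): Σ_m (F̂ⁿ,ᵐ − F₁) = O_p(M^{1/2}) + O_p(M·n^{−1/2})
    (h37 : ∃ A B : ∀ n, Ω n → ℝ,
      (∀ n ω, ∑ m, (F n m ω - F₁) = A n ω + B n ω) ∧
      @BddInProb Ω mΩ μ (fun n ω => A n ω / Real.sqrt (M n)) ∧
      @BddInProb Ω mΩ μ (fun n ω => B n ω * Real.sqrt n / M n))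
    -- Assumption (3.8): Σ_m ((F̂ⁿ,ᵐ)² − F₁²) = O_p(M^{1/2}) + O_p(M·n^{−1/2})
    (h38 : ∃ A B : ∀ n, Ω n → ℝ,
      (∀ n ω, ∑ m, ((F n m ω) ^ 2 - F₁ ^ 2) = A n ω + B n ω) ∧
      @BddInProb Ω mΩ μ (fun n ω => A n ω / Real.sqrt (M n)) ∧
      @BddInProb Ω mΩ μ (fun n ω => B n ω * Real.sqrt n / M n))
    -- Assumption (3.9): n / I(n)² → 0
    (h39 : Tendsto (fun n : ℕ => (n : ℝ) / (I n : ℝ) ^ 2) atTop (nhds 0))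
    -- Assumption (3.10): I(n)² / M(n) is bounded
    (h310 : ∃ K : ℝ, ∀ n, ((I n : ℝ)) ^ 2 / (M n : ℝ) ≤ K) :
    ∀ ε : ℝ, 0 < ε →
      Tendsto (fun n => μ n {ω | ε ≤ (n : ℝ) * abs
          ((1 / ((M n : ℝ) * (I n : ℝ))) *
              ∑ m, (condExp (𝓕₁ n) (μ n) (Fstar n m) ω) ^ 2
            - (1 / ((M n : ℝ) ^ 2 * (I n : ℝ))) *
              (∑ m, condExp (𝓕₁ n) (μ n) (Fstar n m) ω) ^ 2)})
        atTop (nhds 0) :=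
  bias_terms_negligible_general Ω (mΩ := mΩ) μ 𝓕₁ M I hI F Fstar F₁ h32 h37 h38 h39 h310
end
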